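/- arXiv:2012.03143 — 3 statements merged into one kernel-verified Lean document; each statement's English description precedes it below -/
import Mathlib

section
/- There exists a constant C > 0 depending only on α and ε such that for all sufficiently large n, all μ ∈ [1/√n, 1), all t ∈ ℕ, and every simple graph G on n nodes with maximum degree Δ ≤ (C·n/log(1/μ))^{1/(2t)}: for every choice of a seed set R₀ of size αn by an (α,ε)-moderate attacker, the probability (over the independent random colors of the seeds and the random tie-breaking) that the attacker wins in t rounds, i.e. that b̂_t ≥ ŵ_t, is at most μ. -/
open Finset
open scoped Classical

/-- The distance (in `ℕ∞`) from a node `v` to a set `R` of nodes. -/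
noncomputable def distSet {V : Type*} (G : SimpleGraph V) (R : Set V) (v : V) : ℕ∞ :=
  ⨅ u ∈ R, G.edist u v

/-- One update step: a node `v` that gets colored in round `t+1` adopts the most frequent
color among its already colored neighbors (which are exactly its neighbors at distance `t`
from the seed set `R`), breaking a tie using its tie-breaking bit `tie v`
(`true` codes white, `false` codes black). -/
noncomputable def stepColor {V : Type*} [Fintype V] (G : SimpleGraph V) (R : Set V)
    (tie : V → Bool) (t : ℕ) (prev : V → Bool) (v : V) : Bool :=
  let P := Finset.univ.filter fun u => G.Adj v u ∧ distSet G R u = (t : ℕ∞)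
  let w := (P.filter fun u => prev u = true).card
  let b := (P.filter fun u => prev u = false).card
  if b < w then true else if w < b then false else tie v

/-- `colAt G R c0 tie t v` is the color adopted by `v` if it gets colored in round `t`,
where `c0` is the initial coloring of the seed set `R` and `tie` gives the tie-breaking
bits (`true` = white, `false` = black). -/
noncomputable def colAt {V : Type*} [Fintype V] (G : SimpleGraph V) (R : Set V)
    (c0 tie : V → Bool) : ℕ → V → Bool
  | 0 => c0
  | t + 1 => stepColor G R tie t (colAt G R c0 tie t)

/-- The color that node `v` receives in the diffusion process (it is colored in round
`d(v, R)`). -/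
noncomputable def theColor {V : Type*} [Fintype V] (G : SimpleGraph V) (R : Set V)
    (c0 tie : V → Bool) (v : V) : Bool :=
  colAt G R c0 tie (distSet G R v).toNat v

/-- `whiteCount G R c0 tie t` = number of white nodes among all nodes colored during
rounds `0, …, t` (i.e. the quantity `ŵ_t`). -/
noncomputable def whiteCount {V : Type*} [Fintype V] (G : SimpleGraph V) (R : Set V)
    (c0 tie : V → Bool) (t : ℕ) : ℕ :=
  (Finset.univ.filter fun v =>
    distSet G R v ≤ (t : ℕ∞) ∧ theColor G R c0 tie v = true).card

/-- `blackCount G R c0 tie t` = number of black nodes among all nodes colored during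
rounds `0, …, t` (i.e. the quantity `b̂_t`). -/
noncomputable def blackCount {V : Type*} [Fintype V] (G : SimpleGraph V) (R : Set V)
    (c0 tie : V → Bool) (t : ℕ) : ℕ :=
  (Finset.univ.filter fun v =>
    distSet G R v ≤ (t : ℕ∞) ∧ theColor G R c0 tie v = false).card
/-- The probability weight of an outcome `c : V → Bool` when each coordinate is,
independently, `true` with probability `p` (and `false` with probability `1 - p`). -/
noncomputable def bernWeight {V : Type*} [Fintype V] (p : ℝ) (c : V → Bool) : ℝ :=
  ∏ v, if c v then p else 1 - p

/-- The probability of the event `E` when each coordinate is, independently, `true`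
with probability `p`. -/
noncomputable def bernPr (V : Type*) [Fintype V] [DecidableEq V] (p : ℝ)
    (E : (V → Bool) → Prop) : ℝ :=
  ∑ c : V → Bool, if E c then bernWeight p c else 0
/-- The probability of the event `E col tie` when each node is, independently, colored
white (`true`) with probability `p` (black otherwise), and independently each node gets a
uniformly random tie-breaking bit.  (The diffusion process only ever reads the colors of
the seed nodes, so this models an attacker coloring each seed white w.p. `p`.) -/
noncomputable def modPr (V : Type*) [Fintype V] [DecidableEq V] (p : ℝ)
    (E : (V → Bool) → (V → Bool) → Prop) : ℝ :=
  ∑ col : V → Bool, ∑ tie : V → Bool,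
    if E col tie then bernWeight p col * (1/2 : ℝ) ^ (Fintype.card V) else 0

namespace MyMcD

noncomputable def W {m : ℕ} (p : Fin m → ℝ) (c : Fin m → Bool) : ℝ :=
  ∏ i, if c i then p i else 1 - p i

noncomputable def Ex {m : ℕ} (p : Fin m → ℝ) (f : (Fin m → Bool) → ℝ) : ℝ :=
  ∑ c : Fin m → Bool, W p c * f c

lemma Ex_succ {m : ℕ} (p : Fin (m+1) → ℝ) (f : (Fin (m+1) → Bool) → ℝ) :
    Ex p f = Ex (p ∘ Fin.succ)
      (fun c' => p 0 * f (Fin.cons true c') + (1 - p 0) * f (Fin.cons false c')) := by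
  unfold Ex W
  rw [← (Fin.consEquiv (fun _ => Bool)).sum_comp]
  rw [Fintype.sum_prod_type]
  rw [Fintype.sum_bool]
  rw [← Finset.sum_add_distrib]
  apply Finset.sum_congr rfl
  intro c' _
  simp only [Fin.consEquiv_apply, Fin.prod_univ_succ, Fin.cons_zero, Fin.cons_succ,
    Function.comp, Bool.false_eq_true, if_true, if_false, reduceIte, Fin.consEquiv, Equiv.coe_fn_mk]
  ring

lemma Ex_const {m : ℕ} (p : Fin m → ℝ) (r : ℝ) : Ex p (fun _ => r) = r := by
  induction m with
  | zero => simp [Ex, W]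
  | succ m ih =>
      rw [Ex_succ]
      have := ih (p ∘ Fin.succ)
      calc Ex (p ∘ Fin.succ) (fun _ => p 0 * r + (1 - p 0) * r)
          = Ex (p ∘ Fin.succ) (fun _ => r) := by congr 1; funext c; ring
        _ = r := ih _

lemma W_nonneg {m : ℕ} {p : Fin m → ℝ} (h0 : ∀ i, 0 ≤ p i) (h1 : ∀ i, p i ≤ 1)
    (c : Fin m → Bool) : 0 ≤ W p c := by
  apply Finset.prod_nonneg
  intro i _
  by_cases h : c i <;> simp [h] <;> linarith [h0 i, h1 i]

lemma Ex_mono_fun {m : ℕ} {p : Fin m → ℝ} (h0 : ∀ i, 0 ≤ p i) (h1 : ∀ i, p i ≤ 1)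
    {f g : (Fin m → Bool) → ℝ} (h : ∀ c, f c ≤ g c) : Ex p f ≤ Ex p g := by
  apply Finset.sum_le_sum
  intro c _
  exact mul_le_mul_of_nonneg_left (h c) (W_nonneg h0 h1 c)

lemma Ex_add {m : ℕ} (p : Fin m → ℝ) (f g : (Fin m → Bool) → ℝ) :
    Ex p (fun c => f c + g c) = Ex p f + Ex p g := by
  unfold Ex; rw [← Finset.sum_add_distrib]; apply Finset.sum_congr rfl; intros; ring

lemma Ex_smul {m : ℕ} (p : Fin m → ℝ) (r : ℝ) (f : (Fin m → Bool) → ℝ) :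
    Ex p (fun c => r * f c) = r * Ex p f := by
  unfold Ex; rw [Finset.mul_sum]; apply Finset.sum_congr rfl; intros; ring

lemma Ex_sum {m : ℕ} (p : Fin m → ℝ) {ι : Type*} (s : Finset ι)
    (f : ι → (Fin m → Bool) → ℝ) :
    Ex p (fun c => ∑ v ∈ s, f v c) = ∑ v ∈ s, Ex p (f v) := by
  unfold Ex
  rw [Finset.sum_comm]
  apply Finset.sum_congr rfl; intros; rw [Finset.mul_sum]

lemma Ex_mono_p {m : ℕ} {p q : Fin m → ℝ} (hp0 : ∀ i, 0 ≤ p i)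
    (hpq : ∀ i, p i ≤ q i) (hq1 : ∀ i, q i ≤ 1)
    {f : (Fin m → Bool) → ℝ} (hf : Monotone f) : Ex p f ≤ Ex q f := by
  induction m with
  | zero =>
      simp [Ex, W]
  | succ m ih =>
      rw [Ex_succ p f, Ex_succ q f]
      have key : ∀ c' : Fin m → Bool,
          p 0 * f (Fin.cons true c') + (1 - p 0) * f (Fin.cons false c') ≤
          q 0 * f (Fin.cons true c') + (1 - q 0) * f (Fin.cons false c') := by
        intro c'
        have hfb : f (Fin.cons false c') ≤ f (Fin.cons true c') := by
          apply hf
          intro i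
          refine Fin.cases ?_ ?_ i <;> simp [Fin.cons_zero, Fin.cons_succ]
        nlinarith [hpq 0]
      calc Ex (p ∘ Fin.succ)
              (fun c' => p 0 * f (Fin.cons true c') + (1 - p 0) * f (Fin.cons false c'))
          ≤ Ex (p ∘ Fin.succ)
              (fun c' => q 0 * f (Fin.cons true c') + (1 - q 0) * f (Fin.cons false c')) := by
            apply Ex_mono_fun (fun i => hp0 i.succ)
              (fun i => le_trans (hpq i.succ) (hq1 i.succ)) key
        _ ≤ Ex (q ∘ Fin.succ)
              (fun c' => q 0 * f (Fin.cons true c') + (1 - q 0) * f (Fin.cons false c')) := by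
            apply ih (fun i => hp0 i.succ) (fun i => hpq i.succ) (fun i => hq1 i.succ)
            intro c' d' hcd
            have h1 : f (Fin.cons true c') ≤ f (Fin.cons true d') := by
              apply hf; intro i
              refine Fin.cases ?_ ?_ i <;> simp [Fin.cons_zero, Fin.cons_succ]
              · exact fun j => hcd j
            have h2 : f (Fin.cons false c') ≤ f (Fin.cons false d') := by
              apply hf; intro i
              refine Fin.cases ?_ ?_ i <;> simp [Fin.cons_zero, Fin.cons_succ]
              · exact fun j => hcd j
            have hq0 : 0 ≤ q 0 := le_trans (hp0 0) (hpq 0)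
            have hq1' : q 0 ≤ 1 := hq1 0
            dsimp only
            exact add_le_add (mul_le_mul_of_nonneg_left h1 hq0)
              (mul_le_mul_of_nonneg_left h2 (by linarith))

lemma Ex_coord {m : ℕ} (p : Fin m → ℝ) (i : Fin m) :
    Ex p (fun c => if c i then (1:ℝ) else 0) = p i := by
  induction m with
  | zero => exact absurd i.2 (by simp)
  | succ m ih =>
      rw [Ex_succ]
      refine Fin.cases ?_ ?_ i
      · simp only [Fin.cons_zero, if_true, if_false, Bool.false_eq_true, reduceIte]
        calc Ex (p ∘ Fin.succ) (fun _ => p 0 * 1 + (1 - p 0) * 0)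
            = Ex (p ∘ Fin.succ) (fun _ => p 0) := by congr 1; funext c; ring
          _ = p 0 := Ex_const _ _
      · intro j
        simp only [Fin.cons_succ]
        calc Ex (p ∘ Fin.succ)
                (fun c' => p 0 * (if c' j then (1:ℝ) else 0) + (1 - p 0) * (if c' j then 1 else 0))
            = Ex (p ∘ Fin.succ) (fun c' => if c' j then (1:ℝ) else 0) := by
              congr 1; funext c'; by_cases h : c' j <;> simp [h]
          _ = p j.succ := ih (p ∘ Fin.succ) j

lemma exp_seg (s κ x : ℝ) (hκ : 0 < κ) (hx : |x| ≤ κ) :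
    Real.exp (s * x) ≤ Real.cosh (s * κ) + (x / κ) * Real.sinh (s * κ) := by
  obtain ⟨hx1, hx2⟩ := abs_le.mp hx
  set l : ℝ := (κ + x) / (2 * κ) with hl
  have hl0 : 0 ≤ l := div_nonneg (by linarith) (by linarith)
  have hl1 : l + (1 - l) = 1 := by ring
  have hl2 : 1 - l ≥ 0 := by
    have : l ≤ 1 := by rw [hl, div_le_one (by linarith)]; linarith
    linarith
  have hl' : l * (2 * κ) = κ + x := by rw [hl]; exact div_mul_cancel₀ _ (by positivity)
  have hcomb : l * (s * κ) + (1 - l) * (-(s * κ)) = s * x := by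
    field_simp [hl]; linear_combination s * hl'
  have h := convexOn_exp.2 (Set.mem_univ (s * κ)) (Set.mem_univ (-(s * κ))) hl0 hl2 hl1
  simp only [smul_eq_mul] at h
  rw [hcomb] at h
  refine h.trans (le_of_eq ?_)
  rw [Real.cosh_eq, Real.sinh_eq]
  have hxκ : x / κ = 2 * l - 1 := by rw [div_eq_iff hκ.ne']; linear_combination -hl'
  rw [hxκ]; ring

lemma twoPoint (q a b s κ : ℝ) (hq0 : 0 ≤ q) (hq1 : q ≤ 1) (hab : |a - b| ≤ κ) :
    q * Real.exp (s * a) + (1 - q) * Real.exp (s * b) ≤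
      Real.exp (s * (q * a + (1 - q) * b)) * Real.exp (s ^ 2 * κ ^ 2 / 2) := by
  have hκ0 : 0 ≤ κ := le_trans (abs_nonneg _) hab
  set μ := q * a + (1 - q) * b with hμ
  have ha : a - μ = (1 - q) * (a - b) := by rw [hμ]; ring
  have hb : b - μ = -q * (a - b) := by rw [hμ]; ring
  have hxa : |a - μ| ≤ κ := by
    rw [ha, abs_mul, abs_of_nonneg (by linarith : (0:ℝ) ≤ 1 - q)]
    nlinarith [abs_nonneg (a - b)]
  have hxb : |b - μ| ≤ κ := by
    rw [hb, abs_mul, abs_neg, abs_of_nonneg hq0]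
    nlinarith [abs_nonneg (a - b)]
  rcases eq_or_lt_of_le hκ0 with hκ | hκ
  · subst hκ
    have hab0 : a = b := by
      have := abs_nonpos_iff.mp hab
      linarith [sub_eq_zero.mp this]
    subst hab0
    have : q * Real.exp (s * a) + (1 - q) * Real.exp (s * a) = Real.exp (s * a) := by ring
    rw [this]
    have hμa : μ = a := by rw [hμ]; ring
    rw [hμa]
    simp
  · have key : q * Real.exp (s * (a - μ)) + (1 - q) * Real.exp (s * (b - μ)) ≤
        Real.cosh (s * κ) := by
      have h1 := exp_seg s κ (a - μ) hκ hxa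
      have h2 := exp_seg s κ (b - μ) hκ hxb
      have hzero : q * ((a - μ) / κ) + (1 - q) * ((b - μ) / κ) = 0 := by
        rw [ha, hb]; field_simp; ring
      have h3 : (q * ((a - μ) / κ) + (1 - q) * ((b - μ) / κ)) * Real.sinh (s * κ) = 0 := by
        rw [hzero]; ring
      have h4 := mul_le_mul_of_nonneg_left h1 hq0
      have h5 := mul_le_mul_of_nonneg_left h2 (by linarith : (0:ℝ) ≤ 1 - q)
      nlinarith [h3, h4, h5]
    have hch : Real.cosh (s * κ) ≤ Real.exp (s ^ 2 * κ ^ 2 / 2) := by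
      refine (Real.cosh_le_exp_half_sq (s * κ)).trans (le_of_eq ?_)
      ring_nf
    calc q * Real.exp (s * a) + (1 - q) * Real.exp (s * b)
        = Real.exp (s * μ) * (q * Real.exp (s * (a - μ)) + (1 - q) * Real.exp (s * (b - μ))) := by
          rw [mul_add, ← mul_assoc, ← mul_assoc, mul_comm (Real.exp (s*μ)) q,
            mul_comm (Real.exp (s*μ)) (1-q), mul_assoc, mul_assoc, ← Real.exp_add, ← Real.exp_add]
          ring_nf
      _ ≤ Real.exp (s * μ) * Real.exp (s ^ 2 * κ ^ 2 / 2) := by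
          apply mul_le_mul_of_nonneg_left (key.trans hch) (Real.exp_nonneg _)

lemma mgf_bound {m : ℕ} (p κ : Fin m → ℝ) (h0 : ∀ i, 0 ≤ p i) (h1 : ∀ i, p i ≤ 1)
    (f : (Fin m → Bool) → ℝ) (s : ℝ)
    (hbd : ∀ (i : Fin m) (c : Fin m → Bool) (b : Bool),
      |f c - f (Function.update c i b)| ≤ κ i) :
    Ex p (fun c => Real.exp (s * f c)) ≤
      Real.exp (s * Ex p f + s ^ 2 / 2 * ∑ i, (κ i) ^ 2) := by
  induction m with
  | zero =>
      have : Ex p (fun c => Real.exp (s * f c)) = Real.exp (s * Ex p f) := by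
        simp [Ex, W]
      rw [this]
      apply Real.exp_le_exp.mpr
      simp
  | succ m ih =>
      set g : (Fin m → Bool) → ℝ :=
        fun c' => p 0 * f (Fin.cons true c') + (1 - p 0) * f (Fin.cons false c') with hg
      have hEf : Ex p f = Ex (p ∘ Fin.succ) g := Ex_succ p f
      have h2pt : ∀ c' : Fin m → Bool,
          p 0 * Real.exp (s * f (Fin.cons true c')) + (1 - p 0) * Real.exp (s * f (Fin.cons false c'))
            ≤ Real.exp (s * g c') * Real.exp (s ^ 2 * (κ 0) ^ 2 / 2) := by
        intro c'
        apply twoPoint _ _ _ _ _ (h0 0) (h1 0)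
        have := hbd 0 (Fin.cons true c') false
        rwa [Fin.update_cons_zero] at this
      have hgbd : ∀ (j : Fin m) (c' : Fin m → Bool) (b : Bool),
          |g c' - g (Function.update c' j b)| ≤ κ j.succ := by
        intro j c' b
        have e1 : Fin.cons (α := fun _ => Bool) true (Function.update c' j b) =
            Function.update (Fin.cons true c') j.succ b := Fin.cons_update ..
        have e2 : Fin.cons (α := fun _ => Bool) false (Function.update c' j b) =
            Function.update (Fin.cons false c') j.succ b := Fin.cons_update ..
        have hA := hbd j.succ (Fin.cons true c') b
        have hB := hbd j.succ (Fin.cons false c') b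
        rw [← e1] at hA
        rw [← e2] at hB
        have expand : g c' - g (Function.update c' j b) =
            p 0 * (f (Fin.cons true c') - f (Fin.cons true (Function.update c' j b))) +
            (1 - p 0) * (f (Fin.cons false c') - f (Fin.cons false (Function.update c' j b))) := by
          rw [hg]; ring
        rw [expand]
        calc |p 0 * (f (Fin.cons true c') - f (Fin.cons true (Function.update c' j b))) +
            (1 - p 0) * (f (Fin.cons false c') - f (Fin.cons false (Function.update c' j b)))|
            ≤ |p 0 * (f (Fin.cons true c') - f (Fin.cons true (Function.update c' j b)))| +
              |(1 - p 0) * (f (Fin.cons false c') - f (Fin.cons false (Function.update c' j b)))| :=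
              abs_add_le _ _
          _ ≤ p 0 * κ j.succ + (1 - p 0) * κ j.succ := by
              rw [abs_mul, abs_mul, abs_of_nonneg (h0 0),
                abs_of_nonneg (by linarith [h1 0] : (0:ℝ) ≤ 1 - p 0)]
              have hκ0 : (0:ℝ) ≤ κ j.succ := le_trans (abs_nonneg _) hA
              exact add_le_add (mul_le_mul_of_nonneg_left hA (h0 0))
                (mul_le_mul_of_nonneg_left hB (by linarith [h1 0]))
          _ = κ j.succ := by ring
      calc Ex p (fun c => Real.exp (s * f c))
          = Ex (p ∘ Fin.succ) (fun c' =>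
              p 0 * Real.exp (s * f (Fin.cons true c')) +
              (1 - p 0) * Real.exp (s * f (Fin.cons false c'))) := Ex_succ p _
        _ ≤ Ex (p ∘ Fin.succ) (fun c' =>
              Real.exp (s ^ 2 * (κ 0) ^ 2 / 2) * Real.exp (s * g c')) := by
            apply Ex_mono_fun (fun i => h0 i.succ) (fun i => h1 i.succ)
            intro c'
            exact le_trans (h2pt c') (le_of_eq (mul_comm _ _))
        _ = Real.exp (s ^ 2 * (κ 0) ^ 2 / 2) * Ex (p ∘ Fin.succ) (fun c' => Real.exp (s * g c')) :=
            Ex_smul _ _ _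
        _ ≤ Real.exp (s ^ 2 * (κ 0) ^ 2 / 2) *
            Real.exp (s * Ex (p ∘ Fin.succ) g + s ^ 2 / 2 * ∑ j : Fin m, ((κ ∘ Fin.succ) j) ^ 2) := by
            apply mul_le_mul_of_nonneg_left _ (Real.exp_nonneg _)
            exact ih (p ∘ Fin.succ) (κ ∘ Fin.succ) (fun i => h0 i.succ) (fun i => h1 i.succ) g hgbd
        _ = Real.exp (s * Ex p f + s ^ 2 / 2 * ∑ i, (κ i) ^ 2) := by
            rw [← Real.exp_add, hEf, Fin.sum_univ_succ (fun i => (κ i) ^ 2)]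
            congr 1
            simp only [Function.comp]
            ring

lemma Ex_neg {m : ℕ} (p : Fin m → ℝ) (f : (Fin m → Bool) → ℝ) :
    Ex p (fun c => -(f c)) = -(Ex p f) := by
  have := Ex_smul p (-1) f
  simpa using this

lemma chernoff {m : ℕ} (p κ : Fin m → ℝ) (h0 : ∀ i, 0 ≤ p i) (h1 : ∀ i, p i ≤ 1)
    (f : (Fin m → Bool) → ℝ)
    (hbd : ∀ (i : Fin m) (c : Fin m → Bool) (b : Bool),
      |f c - f (Function.update c i b)| ≤ κ i)
    (lam : ℝ) (hlam : 0 < lam) (hS : 0 < ∑ i, (κ i) ^ 2) :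
    Ex p (fun c => if f c ≤ Ex p f - lam then (1:ℝ) else 0) ≤
      Real.exp (-(lam ^ 2) / (2 * ∑ i, (κ i) ^ 2)) := by
  set S := ∑ i, (κ i) ^ 2 with hSdef
  set s : ℝ := lam / S with hs
  have hs0 : 0 ≤ s := le_of_lt (div_pos hlam hS)
  have hbd' : ∀ (i : Fin m) (c : Fin m → Bool) (b : Bool),
      |(fun c => -(f c)) c - (fun c => -(f c)) (Function.update c i b)| ≤ κ i := by
    intro i c b
    simp only
    rw [show -(f c) - -(f (Function.update c i b)) = -(f c - f (Function.update c i b)) by ring,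
      abs_neg]
    exact hbd i c b
  have hmgf := mgf_bound p κ h0 h1 (fun c => -(f c)) s hbd'
  rw [Ex_neg] at hmgf
  have hptwise : ∀ c, (if f c ≤ Ex p f - lam then (1:ℝ) else 0) ≤
      Real.exp (s * (Ex p f - lam)) * Real.exp (s * -(f c)) := by
    intro c
    by_cases h : f c ≤ Ex p f - lam
    · rw [if_pos h, ← Real.exp_add]
      apply Real.one_le_exp
      nlinarith
    · rw [if_neg h]
      positivity
  calc Ex p (fun c => if f c ≤ Ex p f - lam then (1:ℝ) else 0)
      ≤ Ex p (fun c => Real.exp (s * (Ex p f - lam)) * Real.exp (s * -(f c))) :=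
        Ex_mono_fun h0 h1 hptwise
    _ = Real.exp (s * (Ex p f - lam)) * Ex p (fun c => Real.exp (s * -(f c))) := Ex_smul _ _ _
    _ ≤ Real.exp (s * (Ex p f - lam)) * Real.exp (s * -(Ex p f) + s ^ 2 / 2 * S) := by
        apply mul_le_mul_of_nonneg_left _ (Real.exp_nonneg _)
        convert hmgf using 4
    _ = Real.exp (s * (Ex p f - lam) + (s * -(Ex p f) + s ^ 2 / 2 * S)) := (Real.exp_add _ _).symm
    _ ≤ Real.exp (-(lam ^ 2) / (2 * S)) := by
        apply Real.exp_le_exp.mpr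
        have : s * (Ex p f - lam) + (s * -(Ex p f) + s ^ 2 / 2 * S) = -(lam ^ 2) / (2 * S) := by
          rw [hs]
          field_simp
          ring
        rw [this]

lemma Ex_half_selfflip {m : ℕ} (F : (Fin m → Bool) → Bool)
    (hF : ∀ c, F (fun i => !(c i)) = !(F c)) :
    Ex (fun _ => (1/2 : ℝ)) (fun c => if F c then (1:ℝ) else 0) = 1/2 := by
  have hW : ∀ c : Fin m → Bool, W (fun _ => (1/2:ℝ)) c = (1/2) ^ m := by
    intro c
    unfold W
    have : ∀ i : Fin m, (if c i then ((fun _ => (1/2:ℝ)) i) else 1 - (fun _ => (1/2:ℝ)) i) = 1/2 := by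
      intro i; by_cases h : c i <;> simp [h] <;> norm_num
    rw [Finset.prod_congr rfl (fun i _ => this i)]
    simp
  have hinv : Function.Involutive (fun c : Fin m → Bool => fun i => !(c i)) := by
    intro c; funext i; simp
  set T := ∑ c : Fin m → Bool, (if F c then (1:ℝ) else 0) with hT
  have h1 : ∑ c : Fin m → Bool, (if F (fun i => !(c i)) then (1:ℝ) else 0) = T :=
    Equiv.sum_comp hinv.toPerm (fun c => if F c then (1:ℝ) else 0)
  have h2 : ∑ c : Fin m → Bool, (if F (fun i => !(c i)) then (1:ℝ) else 0) =
      ∑ c : Fin m → Bool, (1 - if F c then (1:ℝ) else 0) := by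
    apply Finset.sum_congr rfl
    intro c _
    rw [hF c]
    by_cases h : F c <;> simp [h]
  have h3 : ∑ c : Fin m → Bool, (1 - if F c then (1:ℝ) else 0) = 2 ^ m - T := by
    rw [Finset.sum_sub_distrib, ← hT]
    congr 1
    rw [Finset.sum_const, Finset.card_univ]
    simp [Fintype.card_fun]
  have hTval : T = 2 ^ m / 2 := by
    have := h1.symm.trans (h2.trans h3)
    linarith
  have hEx : Ex (fun _ => (1/2 : ℝ)) (fun c => if F c then (1:ℝ) else 0) = (1/2)^m * T := by
    unfold Ex
    rw [hT, Finset.mul_sum]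
    apply Finset.sum_congr rfl
    intro c _
    rw [hW c]
  rw [hEx, hTval]
  rw [one_div, inv_pow]
  field_simp

end MyMcD

namespace MyGraph

variable {V : Type*} [Fintype V] [DecidableEq V]

lemma colAt_flip (G : SimpleGraph V) (R : Set V) (c0 tie : V → Bool) (t : ℕ) (v : V) :
    colAt G R (fun w => !(c0 w)) (fun w => !(tie w)) t v = !(colAt G R c0 tie t v) := by
  induction t generalizing v with
  | zero => rfl
  | succ t ih =>
      show stepColor G R (fun w => !(tie w)) t (colAt G R (fun w => !(c0 w)) (fun w => !(tie w)) t) v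
        = !(stepColor G R tie t (colAt G R c0 tie t) v)
      simp only [stepColor]
      set P := Finset.univ.filter fun u => G.Adj v u ∧ distSet G R u = (t : ℕ∞) with hP
      have hw : (P.filter fun u => colAt G R (fun w => !(c0 w)) (fun w => !(tie w)) t u = true)
          = P.filter fun u => colAt G R c0 tie t u = false := by
        apply Finset.filter_congr
        intro u _
        rw [ih u]
        simp
      have hb : (P.filter fun u => colAt G R (fun w => !(c0 w)) (fun w => !(tie w)) t u = false)
          = P.filter fun u => colAt G R c0 tie t u = true := by
        apply Finset.filter_congr
        intro u _
        rw [ih u]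
        simp
      rw [hw, hb]
      clear_value P
      set a := (P.filter fun u => colAt G R c0 tie t u = true).card
      set b := (P.filter fun u => colAt G R c0 tie t u = false).card
      rcases lt_trichotomy a b with h | h | h
      · simp [h, not_lt.mpr (le_of_lt h), lt_asymm h]
      · simp [h, lt_irrefl]
      · simp [h, not_lt.mpr (le_of_lt h), lt_asymm h]

lemma colAt_mono (G : SimpleGraph V) (R : Set V) {c0 c0' tie tie' : V → Bool}
    (hc : ∀ w, c0 w ≤ c0' w) (ht : ∀ w, tie w ≤ tie' w) (t : ℕ) (v : V) :
    colAt G R c0 tie t v ≤ colAt G R c0' tie' t v := by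
  induction t generalizing v with
  | zero => exact hc v
  | succ t ih =>
      show stepColor G R tie t (colAt G R c0 tie t) v ≤
        stepColor G R tie' t (colAt G R c0' tie' t) v
      simp only [stepColor]
      set P := Finset.univ.filter fun u => G.Adj v u ∧ distSet G R u = (t : ℕ∞) with hP
      set a := (P.filter fun u => colAt G R c0 tie t u = true).card with ha
      set b := (P.filter fun u => colAt G R c0 tie t u = false).card with hb
      set a' := (P.filter fun u => colAt G R c0' tie' t u = true).card with ha'
      set b' := (P.filter fun u => colAt G R c0' tie' t u = false).card with hb'
      have haa : a ≤ a' := by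
        apply Finset.card_le_card
        apply Finset.monotone_filter_right
        intro u _ hu
        exact Bool.le_iff_imp.mp (ih u) hu
      have hbb : b' ≤ b := by
        apply Finset.card_le_card
        apply Finset.monotone_filter_right
        intro u _ hu
        have := ih u
        rcases Bool.eq_false_or_eq_true (colAt G R c0 tie t u) with h | h
        · rw [h] at this
          rw [Bool.le_iff_imp.mp this rfl] at hu
          exact absurd hu (by simp)
        · exact h
      rw [Bool.le_iff_imp]
      intro hx
      by_cases h1 : b < a
      · have : b' < a' := lt_of_le_of_lt hbb (lt_of_lt_of_le h1 haa)
        simp [this]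
      · by_cases h2 : a < b
        · rw [if_neg h1, if_pos h2] at hx
          exact absurd hx (by simp)
        · rw [if_neg h1, if_neg h2] at hx
          have hab : a = b := le_antisymm (not_lt.mp h1) (not_lt.mp h2)
          have hb'a' : ¬ (a' < b') := by
            intro hlt
            exact absurd (lt_of_le_of_lt (hab ▸ haa : b ≤ a') (lt_of_lt_of_le hlt hbb))
              (lt_irrefl b)
          by_cases h3 : b' < a'
          · simp [h3]
          · rw [if_neg h3, if_neg hb'a']
            exact Bool.le_iff_imp.mp (ht v) hx

lemma colAt_local (G : SimpleGraph V) (R : Set V) {c0 c0' tie tie' : V → Bool}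
    (s : ℕ) (v : V)
    (h : ∀ w, G.edist v w ≤ (s : ℕ∞) → c0 w = c0' w ∧ tie w = tie' w) :
    colAt G R c0 tie s v = colAt G R c0' tie' s v := by
  induction s generalizing v with
  | zero => exact (h v (by simp)).1
  | succ s ih =>
      show stepColor G R tie s (colAt G R c0 tie s) v =
        stepColor G R tie' s (colAt G R c0' tie' s) v
      simp only [stepColor]
      have hfilter : ∀ bb : Bool,
          (Finset.univ.filter fun u => G.Adj v u ∧ distSet G R u = (s : ℕ∞)).filter
            (fun u => colAt G R c0 tie s u = bb) =
          (Finset.univ.filter fun u => G.Adj v u ∧ distSet G R u = (s : ℕ∞)).filter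
            (fun u => colAt G R c0' tie' s u = bb) := by
        intro bb
        apply Finset.filter_congr
        intro u hu
        have hadj : G.Adj v u := (Finset.mem_filter.mp hu).2.1
        have : colAt G R c0 tie s u = colAt G R c0' tie' s u := by
          apply ih
          intro w hw
          apply h
          calc G.edist v w ≤ G.edist v u + G.edist u w := SimpleGraph.edist_triangle
            _ ≤ 1 + (s : ℕ∞) := add_le_add (le_of_eq (SimpleGraph.edist_eq_one_iff_adj.mpr hadj)) hw
            _ = ((s + 1 : ℕ) : ℕ∞) := by push_cast; rw [add_comm]
        rw [this]
      rw [hfilter true, hfilter false]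
      have : tie v = tie' v := (h v (by simp)).2
      rw [this]

lemma distSet_zero_of_mem (G : SimpleGraph V) (R : Set V) {v : V} (hv : v ∈ R) :
    distSet G R v = 0 := by
  apply le_antisymm _ zero_le
  calc distSet G R v ≤ G.edist v v := by
        apply iInf₂_le v hv
    _ = 0 := SimpleGraph.edist_self

lemma theColor_seed (G : SimpleGraph V) (R : Set V) (c0 tie : V → Bool) {v : V} (hv : v ∈ R) :
    theColor G R c0 tie v = c0 v := by
  unfold theColor
  rw [distSet_zero_of_mem G R hv]
  rfl

lemma theColor_flip (G : SimpleGraph V) (R : Set V) (c0 tie : V → Bool) (v : V) :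
    theColor G R (fun w => !(c0 w)) (fun w => !(tie w)) v = !(theColor G R c0 tie v) :=
  colAt_flip G R c0 tie _ v

lemma theColor_mono (G : SimpleGraph V) (R : Set V) {c0 c0' tie tie' : V → Bool}
    (hc : ∀ w, c0 w ≤ c0' w) (ht : ∀ w, tie w ≤ tie' w) (v : V) :
    theColor G R c0 tie v ≤ theColor G R c0' tie' v :=
  colAt_mono G R hc ht _ v

lemma theColor_local (G : SimpleGraph V) (R : Set V) {c0 c0' tie tie' : V → Bool}
    (t : ℕ) (v : V) (hv : distSet G R v ≤ (t : ℕ∞))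
    (h : ∀ w, G.edist v w ≤ (t : ℕ∞) → c0 w = c0' w ∧ tie w = tie' w) :
    theColor G R c0 tie v = theColor G R c0' tie' v := by
  unfold theColor
  apply colAt_local
  intro w hw
  apply h
  refine le_trans hw ?_
  have hne : distSet G R v ≠ ⊤ := fun hh => by
    rw [hh] at hv; exact absurd hv (by simp)
  obtain ⟨k, hk⟩ := WithTop.ne_top_iff_exists.mp hne
  rw [← hk] at hv ⊢
  show ((ENat.toNat (k : ℕ∞) : ℕ) : ℕ∞) ≤ t
  rw [ENat.toNat_coe]
  exact hv

lemma sphere_succ_subset (G : SimpleGraph V) (u : V) (i : ℕ) :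
    (Finset.univ.filter fun w => G.edist u w = ((i+1 : ℕ) : ℕ∞)) ⊆
      (Finset.univ.filter fun w => G.edist u w = (i : ℕ∞)).biUnion
        (fun x => G.neighborFinset x) := by
  intro w hw
  have hE : G.edist u w = ((i+1 : ℕ) : ℕ∞) := (Finset.mem_filter.mp hw).2
  have hE' : G.edist w u = ((i+1 : ℕ) : ℕ∞) := by rw [SimpleGraph.edist_comm]; exact hE
  obtain ⟨p, hp⟩ := SimpleGraph.exists_walk_of_edist_eq_coe hE'
  cases p with
  | nil => simp at hp
  | @cons _ x _ h r =>
      rw [SimpleGraph.Walk.length_cons] at hp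
      have hr : r.length = i := by omega
      have hux_le : G.edist u x ≤ (i : ℕ∞) := by
        have := SimpleGraph.edist_le r.reverse
        rwa [SimpleGraph.Walk.length_reverse, hr] at this
      have hux_ge : (i : ℕ∞) ≤ G.edist u x := by
        have htri : G.edist u w ≤ G.edist u x + G.edist x w := SimpleGraph.edist_triangle
        have hxw : G.edist x w ≤ 1 := le_of_eq (SimpleGraph.edist_eq_one_iff_adj.mpr h.symm)
        have h1 : ((i+1 : ℕ) : ℕ∞) ≤ G.edist u x + 1 := by
          refine hE ▸ htri.trans ?_
          exact add_le_add le_rfl hxw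
        have h2 : ((i : ℕ) : ℕ∞) + 1 ≤ G.edist u x + 1 := by
          refine le_trans (le_of_eq ?_) h1
          push_cast
          ring
        exact (WithTop.add_le_add_iff_right (by simp : (1:ℕ∞) ≠ ⊤)).mp h2
      have hux : G.edist u x = (i : ℕ∞) := le_antisymm hux_le hux_ge
      apply Finset.mem_biUnion.mpr
      exact ⟨x, Finset.mem_filter.mpr ⟨Finset.mem_univ _, hux⟩,
        (SimpleGraph.mem_neighborFinset _ _ _).mpr h.symm⟩

lemma sphere_card_le_pow (G : SimpleGraph V) (Δ : ℕ) (hΔ : ∀ v, G.degree v ≤ Δ)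
    (u : V) (i : ℕ) :
    (Finset.univ.filter fun w => G.edist u w = (i : ℕ∞)).card ≤ (max Δ 1) ^ i := by
  induction i with
  | zero =>
      have : (Finset.univ.filter fun w => G.edist u w = ((0:ℕ) : ℕ∞)) ⊆ {u} := by
        intro w hw
        have := (Finset.mem_filter.mp hw).2
        rw [show ((0:ℕ):ℕ∞) = 0 by rfl, SimpleGraph.edist_eq_zero_iff] at this
        simp [this.symm]
      calc _ ≤ ({u} : Finset V).card := Finset.card_le_card this
        _ = 1 := Finset.card_singleton u
        _ ≤ _ := by simp
  | succ i ih =>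
      calc (Finset.univ.filter fun w => G.edist u w = ((i+1 : ℕ) : ℕ∞)).card
          ≤ ((Finset.univ.filter fun w => G.edist u w = (i : ℕ∞)).biUnion
              (fun x => G.neighborFinset x)).card :=
            Finset.card_le_card (sphere_succ_subset G u i)
        _ ≤ ∑ x ∈ (Finset.univ.filter fun w => G.edist u w = (i : ℕ∞)),
              (G.neighborFinset x).card := Finset.card_biUnion_le
        _ ≤ ∑ _x ∈ (Finset.univ.filter fun w => G.edist u w = (i : ℕ∞)), (max Δ 1) := by
            apply Finset.sum_le_sum
            intro x _
            rw [SimpleGraph.card_neighborFinset_eq_degree]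
            exact le_trans (hΔ x) (le_max_left _ _)
        _ = (Finset.univ.filter fun w => G.edist u w = (i : ℕ∞)).card * (max Δ 1) :=
            Finset.sum_const _
        _ ≤ (max Δ 1) ^ i * (max Δ 1) := Nat.mul_le_mul_right _ ih
        _ = (max Δ 1) ^ (i + 1) := (pow_succ _ _).symm

lemma ball_card_le (G : SimpleGraph V) (Δ : ℕ) (hΔ : ∀ v, G.degree v ≤ Δ)
    (u : V) (t : ℕ) :
    (Finset.univ.filter fun w => G.edist u w ≤ (t : ℕ∞)).card ≤ 2 * (max Δ 1) ^ t := by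
  by_cases hD : Δ ≤ 1
  · -- small degree case : ball is contained in {u} ∪ N(u)
    have hsub : (Finset.univ.filter fun w => G.edist u w ≤ (t : ℕ∞)) ⊆
        insert u (G.neighborFinset u) := by
      intro w hw
      have hle : G.edist u w ≤ (t : ℕ∞) := (Finset.mem_filter.mp hw).2
      by_contra hcon
      have hwu : w ≠ u := by rintro rfl; exact hcon (Finset.mem_insert_self _ _)
      have hnadj : ¬ G.Adj u w := fun hadj =>
        hcon (Finset.mem_insert_of_mem ((SimpleGraph.mem_neighborFinset _ _ _).mpr hadj))
      have hne : G.edist u w ≠ ⊤ := fun hh => by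
        rw [hh] at hle; simp at hle
      obtain ⟨k, hk⟩ := WithTop.ne_top_iff_exists.mp hne
      have hk0 : k ≠ 0 := by
        rintro rfl
        exact hwu (SimpleGraph.edist_eq_zero_iff.mp hk.symm).symm
      have hk1 : k ≠ 1 := by
        rintro rfl
        exact hnadj (SimpleGraph.edist_eq_one_iff_adj.mp hk.symm)
      have hk2 : 2 ≤ k := by omega
      obtain ⟨p, hp⟩ := SimpleGraph.exists_walk_of_edist_eq_coe hk.symm
      cases p with
      | nil => simp at hp; omega
      | @cons _ x _ h1 r =>
          cases r with
          | nil => simp at hp; omega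
          | @cons _ y _ h2 r2 =>
              simp only [SimpleGraph.Walk.length_cons] at hp
              by_cases huy : u = y
              · subst huy
                have : G.edist u w ≤ (r2.length : ℕ∞) := SimpleGraph.edist_le r2
                rw [← hk] at this
                have : k ≤ r2.length := Nat.cast_le.mp this
                omega
              · have hpair : ({u, y} : Finset V) ⊆ G.neighborFinset x := by
                  intro z hz
                  rcases Finset.mem_insert.mp hz with rfl | hz
                  · exact (SimpleGraph.mem_neighborFinset _ _ _).mpr h1.symm
                  · rw [Finset.mem_singleton.mp hz]
                    exact (SimpleGraph.mem_neighborFinset _ _ _).mpr h2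
                have hcard : 2 ≤ G.degree x := by
                  calc 2 = ({u, y} : Finset V).card := by
                        rw [Finset.card_insert_of_notMem (by simpa using huy),
                          Finset.card_singleton]
                    _ ≤ (G.neighborFinset x).card := Finset.card_le_card hpair
                    _ = G.degree x := SimpleGraph.card_neighborFinset_eq_degree _ _
                have := hΔ x
                omega
    have hpow : 1 ≤ (max Δ 1) ^ t := Nat.one_le_pow _ _ (by omega)
    calc (Finset.univ.filter fun w => G.edist u w ≤ (t : ℕ∞)).card
        ≤ (insert u (G.neighborFinset u)).card := Finset.card_le_card hsub
      _ ≤ (G.neighborFinset u).card + 1 := Finset.card_insert_le _ _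
      _ ≤ 2 := by
          rw [SimpleGraph.card_neighborFinset_eq_degree]
          have := hΔ u
          omega
      _ = 2 * 1 := by ring
      _ ≤ 2 * (max Δ 1) ^ t := Nat.mul_le_mul_left _ hpow
  · push_neg at hD
    have hM : max Δ 1 = Δ := max_eq_left (by omega)
    have hsub : (Finset.univ.filter fun w => G.edist u w ≤ (t : ℕ∞)) ⊆
        (Finset.range (t+1)).biUnion
          (fun i => Finset.univ.filter fun w => G.edist u w = (i : ℕ∞)) := by
      intro w hw
      have hle : G.edist u w ≤ (t : ℕ∞) := (Finset.mem_filter.mp hw).2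
      have hne : G.edist u w ≠ ⊤ := fun hh => by
        rw [hh] at hle; simp at hle
      obtain ⟨k, hk⟩ := WithTop.ne_top_iff_exists.mp hne
      have hkt : k ≤ t := by
        rw [← hk] at hle
        exact Nat.cast_le.mp hle
      apply Finset.mem_biUnion.mpr
      exact ⟨k, Finset.mem_range.mpr (by omega),
        Finset.mem_filter.mpr ⟨Finset.mem_univ _, hk.symm⟩⟩
    have hgeom : ∀ s : ℕ, (∑ i ∈ Finset.range (s+1), Δ ^ i) ≤ 2 * Δ ^ s := by
      intro s
      induction s with
      | zero => simp
      | succ s ih =>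
          rw [Finset.sum_range_succ]
          have h1 : 2 * Δ ^ s ≤ Δ ^ (s+1) := by
            rw [pow_succ, mul_comm 2 (Δ ^ s)]
            exact Nat.mul_le_mul_left _ hD
          have h2 : Δ ^ (s+1) + Δ ^ (s+1) = 2 * Δ ^ (s+1) := by ring
          omega
    calc (Finset.univ.filter fun w => G.edist u w ≤ (t : ℕ∞)).card
        ≤ ∑ i ∈ Finset.range (t+1),
            (Finset.univ.filter fun w => G.edist u w = (i : ℕ∞)).card :=
          le_trans (Finset.card_le_card hsub) Finset.card_biUnion_le
      _ ≤ ∑ i ∈ Finset.range (t+1), (max Δ 1) ^ i :=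
          Finset.sum_le_sum (fun i _ => sphere_card_le_pow G Δ hΔ u i)
      _ ≤ 2 * (max Δ 1) ^ t := by rw [hM]; exact hgeom t

noncomputable def Dfun (G : SimpleGraph V) (R : Set V) (t : ℕ) (c0 tie : V → Bool) : ℝ :=
  ∑ v ∈ Finset.univ.filter (fun v => distSet G R v ≤ (t:ℕ∞)),
    (if theColor G R c0 tie v then (1:ℝ) else -1)

lemma Dfun_eq (G : SimpleGraph V) (R : Set V) (t : ℕ) (c0 tie : V → Bool) :
    Dfun G R t c0 tie =
      (whiteCount G R c0 tie t : ℝ) - (blackCount G R c0 tie t : ℝ) := by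
  unfold Dfun whiteCount blackCount
  rw [← Finset.sum_filter_add_sum_filter_not
    (Finset.univ.filter (fun v => distSet G R v ≤ (t:ℕ∞)))
    (fun v => theColor G R c0 tie v = true)]
  have h1 : ∀ v ∈ (Finset.univ.filter (fun v => distSet G R v ≤ (t:ℕ∞))).filter
      (fun v => theColor G R c0 tie v = true),
      (if theColor G R c0 tie v then (1:ℝ) else -1) = 1 := by
    intro v hv
    rw [(Finset.mem_filter.mp hv).2]
    rfl
  have h2 : ∀ v ∈ (Finset.univ.filter (fun v => distSet G R v ≤ (t:ℕ∞))).filter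
      (fun v => ¬(theColor G R c0 tie v = true)),
      (if theColor G R c0 tie v then (1:ℝ) else -1) = -1 := by
    intro v hv
    have := (Finset.mem_filter.mp hv).2
    rw [if_neg this]
  rw [Finset.sum_congr rfl h1, Finset.sum_congr rfl h2, Finset.sum_const, Finset.sum_const,
    Finset.filter_filter, Finset.filter_filter]
  have hnot : (Finset.univ.filter fun v => distSet G R v ≤ (t:ℕ∞) ∧
      ¬(theColor G R c0 tie v = true)) =
      (Finset.univ.filter fun v => distSet G R v ≤ (t:ℕ∞) ∧ theColor G R c0 tie v = false) := by
    apply Finset.filter_congr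
    intro v _
    simp [Bool.not_eq_true]
  rw [hnot]
  simp only [nsmul_eq_mul, mul_one, mul_neg]
  ring

lemma Dfun_diff (G : SimpleGraph V) (R : Set V) (t : ℕ) (c0 c0' tie tie' : V → Bool) (u : V)
    (hc : ∀ w, w ≠ u → c0 w = c0' w) (ht : ∀ w, w ≠ u → tie w = tie' w) :
    |Dfun G R t c0 tie - Dfun G R t c0' tie'| ≤
      2 * ((Finset.univ.filter fun w => G.edist u w ≤ (t : ℕ∞)).card : ℝ) := by
  set cnt := Finset.univ.filter (fun v => distSet G R v ≤ (t:ℕ∞)) with hcnt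
  have hdiff : Dfun G R t c0 tie - Dfun G R t c0' tie' =
      ∑ v ∈ cnt, ((if theColor G R c0 tie v then (1:ℝ) else -1) -
        (if theColor G R c0' tie' v then (1:ℝ) else -1)) := by
    unfold Dfun
    rw [Finset.sum_sub_distrib]
  have hzero : ∀ v ∈ cnt, ¬(G.edist u v ≤ (t : ℕ∞)) →
      ((if theColor G R c0 tie v then (1:ℝ) else -1) -
        (if theColor G R c0' tie' v then (1:ℝ) else -1)) = 0 := by
    intro v hv hball
    have hvd : distSet G R v ≤ (t:ℕ∞) := (Finset.mem_filter.mp hv).2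
    have hcol : theColor G R c0 tie v = theColor G R c0' tie' v := by
      apply theColor_local G R t v hvd
      intro w hw
      have hwu : w ≠ u := by
        rintro rfl
        exact hball (by rwa [SimpleGraph.edist_comm])
      exact ⟨hc w hwu, ht w hwu⟩
    rw [hcol]
    ring
  rw [hdiff]
  calc |∑ v ∈ cnt, ((if theColor G R c0 tie v then (1:ℝ) else -1) -
        (if theColor G R c0' tie' v then (1:ℝ) else -1))|
      ≤ ∑ v ∈ cnt, |(if theColor G R c0 tie v then (1:ℝ) else -1) -
        (if theColor G R c0' tie' v then (1:ℝ) else -1)| := Finset.abs_sum_le_sum_abs _ _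
    _ = ∑ v ∈ cnt.filter (fun v => G.edist u v ≤ (t : ℕ∞)),
        |(if theColor G R c0 tie v then (1:ℝ) else -1) -
         (if theColor G R c0' tie' v then (1:ℝ) else -1)| := by
        rw [← Finset.sum_filter_add_sum_filter_not cnt (fun v => G.edist u v ≤ (t : ℕ∞))]
        have : ∑ v ∈ cnt.filter (fun v => ¬(G.edist u v ≤ (t : ℕ∞))),
            |(if theColor G R c0 tie v then (1:ℝ) else -1) -
             (if theColor G R c0' tie' v then (1:ℝ) else -1)| = 0 := by
          apply Finset.sum_eq_zero
          intro v hv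
          have hm := Finset.mem_filter.mp hv
          rw [hzero v hm.1 hm.2]
          simp
        rw [this, add_zero]
    _ ≤ ∑ _v ∈ cnt.filter (fun v => G.edist u v ≤ (t : ℕ∞)), (2:ℝ) := by
        apply Finset.sum_le_sum
        intro v _
        rcases Bool.eq_false_or_eq_true (theColor G R c0 tie v) with h | h <;>
          rcases Bool.eq_false_or_eq_true (theColor G R c0' tie' v) with h' | h' <;>
            rw [h, h'] <;> norm_num
    _ = 2 * ((cnt.filter (fun v => G.edist u v ≤ (t : ℕ∞))).card : ℝ) := by
        rw [Finset.sum_const]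
        simp [mul_comm]
    _ ≤ 2 * ((Finset.univ.filter fun w => G.edist u w ≤ (t : ℕ∞)).card : ℝ) := by
        have hsub : cnt.filter (fun v => G.edist u v ≤ (t : ℕ∞)) ⊆
            Finset.univ.filter (fun w => G.edist u w ≤ (t : ℕ∞)) := by
          rw [hcnt, Finset.filter_filter]
          apply Finset.monotone_filter_right
          intro v _ hv
          exact hv.2
        have := Finset.card_le_card hsub
        have : ((cnt.filter (fun v => G.edist u v ≤ (t : ℕ∞))).card : ℝ) ≤
            ((Finset.univ.filter fun w => G.edist u w ≤ (t : ℕ∞)).card : ℝ) := by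
          exact_mod_cast this
        linarith

end MyGraph


namespace Asm

open MyMcD MyGraph

variable (V : Type) [Fintype V] [DecidableEq V]

noncomputable def psi : V ⊕ V ≃ Fin (Fintype.card V + Fintype.card V) :=
  (Equiv.sumCongr (Fintype.equivFin V) (Fintype.equivFin V)).trans finSumFinEquiv

noncomputable def pvec (p : ℝ) : Fin (Fintype.card V + Fintype.card V) → ℝ :=
  fun i => Sum.elim (fun _ => p) (fun _ => (1/2 : ℝ)) ((psi V).symm i)

variable {V}

noncomputable def phiCol (c : Fin (Fintype.card V + Fintype.card V) → Bool) : V → Bool :=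
  fun v => c (psi V (Sum.inl v))

noncomputable def phiTie (c : Fin (Fintype.card V + Fintype.card V) → Bool) : V → Bool :=
  fun v => c (psi V (Sum.inr v))

lemma pvec_inl (p : ℝ) (v : V) : pvec V p (psi V (Sum.inl v)) = p := by
  unfold pvec
  rw [Equiv.symm_apply_apply]
  rfl

lemma pvec_inr (p : ℝ) (v : V) : pvec V p (psi V (Sum.inr v)) = 1/2 := by
  unfold pvec
  rw [Equiv.symm_apply_apply]
  rfl

lemma pvec_cases (p : ℝ) (i : Fin (Fintype.card V + Fintype.card V)) :
    pvec V p i = p ∨ pvec V p i = 1/2 := by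
  unfold pvec
  rcases (psi V).symm i with v | v
  · left; rfl
  · right; rfl

lemma weight_eq (p : ℝ) (c : Fin (Fintype.card V + Fintype.card V) → Bool) :
    W (pvec V p) c = bernWeight p (phiCol c) * (1/2 : ℝ) ^ (Fintype.card V) := by
  unfold W
  rw [← Equiv.prod_comp (psi V) (fun i => if c i then pvec V p i else 1 - pvec V p i)]
  rw [Fintype.prod_sum_type]
  congr 1
  · unfold bernWeight phiCol
    apply Finset.prod_congr rfl
    intro v _
    rw [pvec_inl]
  · have heach : ∀ v : V, (if c ((psi V) (Sum.inr v)) = true then pvec V p ((psi V) (Sum.inr v))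
        else 1 - pvec V p ((psi V) (Sum.inr v))) = (1/2 : ℝ) := by
      intro v
      rw [pvec_inr]
      by_cases h : c ((psi V) (Sum.inr v)) = true
      · rw [if_pos h]
      · rw [if_neg h]; norm_num
    rw [Finset.prod_congr rfl (fun v _ => heach v), Finset.prod_const, Finset.card_univ]

lemma modPr_eq_Ex (p : ℝ) (E : (V → Bool) → (V → Bool) → Prop) :
    modPr V p E = Ex (pvec V p) (fun c => if E (phiCol c) (phiTie c) then (1:ℝ) else 0) := by
  unfold modPr Ex
  have hstep : ∀ c : Fin (Fintype.card V + Fintype.card V) → Bool,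
      W (pvec V p) c * (if E (phiCol c) (phiTie c) then (1:ℝ) else 0) =
      (fun x : (V → Bool) × (V → Bool) =>
        if E x.1 x.2 then bernWeight p x.1 * (1/2 : ℝ) ^ (Fintype.card V) else 0)
        ((Equiv.arrowCongr (psi V).symm (Equiv.refl Bool)).trans
          (Equiv.sumArrowEquivProdArrow V V Bool) c) := by
    intro c
    have h1 : ((Equiv.arrowCongr (psi V).symm (Equiv.refl Bool)).trans
        (Equiv.sumArrowEquivProdArrow V V Bool) c).1 = phiCol c := by
      funext v; rfl
    have h2 : ((Equiv.arrowCongr (psi V).symm (Equiv.refl Bool)).trans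
        (Equiv.sumArrowEquivProdArrow V V Bool) c).2 = phiTie c := by
      funext v; rfl
    dsimp only
    rw [h1, h2, weight_eq]
    by_cases h : E (phiCol c) (phiTie c)
    · rw [if_pos h, if_pos h, mul_one]
    · rw [if_neg h, if_neg h, mul_zero]
  rw [Finset.sum_congr rfl (fun c _ => hstep c)]
  rw [Equiv.sum_comp ((Equiv.arrowCongr (psi V).symm (Equiv.refl Bool)).trans
      (Equiv.sumArrowEquivProdArrow V V Bool))
    (fun x : (V → Bool) × (V → Bool) =>
      if E x.1 x.2 then bernWeight p x.1 * (1/2 : ℝ) ^ (Fintype.card V) else 0)]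
  rw [Fintype.sum_prod_type]

lemma main_bound {V : Type} [Fintype V] [DecidableEq V] (G : SimpleGraph V)
    (R₀ : Finset V) (t : ℕ) (ε : ℝ) (hε0 : 0 < ε) (hε : ε < 1/2)
    (Δ : ℕ) (hΔ : ∀ v, G.degree v ≤ Δ) (hR : R₀.Nonempty) :
    modPr V (1/2 + ε) (fun col tie =>
        whiteCount G (↑R₀) col tie t ≤ blackCount G (↑R₀) col tie t) ≤
      Real.exp (-((2 * ε * (R₀.card : ℝ))^2) /
        (2 * (((Fintype.card V + Fintype.card V : ℕ) : ℝ) *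
          (4 * ((max Δ 1 : ℕ) : ℝ)^t)^2))) := by
  classical
  set nv := Fintype.card V with hnv
  set M : ℕ := max Δ 1 with hM
  set κ : ℝ := 4 * ((M : ℕ) : ℝ)^t with hκ
  set pv := pvec V (1/2 + ε) with hpv
  set f : (Fin (nv + nv) → Bool) → ℝ :=
    fun c => MyGraph.Dfun G (↑R₀) t (phiCol c) (phiTie c) with hf
  have hM1 : 1 ≤ M := le_max_right _ _
  have hMR : (1:ℝ) ≤ (M:ℝ) := by exact_mod_cast hM1
  have hκ0 : 0 < κ := by
    rw [hκ]
    have hMpos : (0:ℝ) < (M:ℝ) := lt_of_lt_of_le one_pos hMR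
    positivity
  have hp0 : ∀ i, 0 ≤ pv i := by
    intro i
    rcases pvec_cases (1/2+ε) i with h | h <;> rw [hpv, h] <;> linarith
  have hp1 : ∀ i, pv i ≤ 1 := by
    intro i
    rcases pvec_cases (1/2+ε) i with h | h <;> rw [hpv, h] <;> linarith
  -- bounded differences
  have hbd : ∀ (i : Fin (nv + nv)) (c : Fin (nv + nv) → Bool) (b : Bool),
      |f c - f (Function.update c i b)| ≤ κ := by
    intro i c b
    have hix : (psi V) ((psi V).symm i) = i := Equiv.apply_symm_apply _ _
    have hball : ∀ u : V,
        2 * ((Finset.univ.filter fun w => G.edist u w ≤ (t : ℕ∞)).card : ℝ) ≤ κ := by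
      intro u
      have h1 := MyGraph.ball_card_le G Δ hΔ u t
      have h2 : ((Finset.univ.filter fun w => G.edist u w ≤ (t : ℕ∞)).card : ℝ) ≤
          ((2 * M ^ t : ℕ) : ℝ) := by exact_mod_cast h1
      rw [hκ]
      push_cast at h2 ⊢
      linarith
    rcases hx : (psi V).symm i with u | u
    · -- a seed-colour coordinate
      have hcol : ∀ w, w ≠ u → phiCol c w = phiCol (Function.update c i b) w := by
        intro w hw
        unfold phiCol
        rw [Function.update_of_ne]
        intro hEq
        apply hw
        have : (Sum.inl w : V ⊕ V) = Sum.inl u := by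
          have := (psi V).injective (hEq.trans (by rw [← hix, hx]))
          exact this
        simpa using this
      have htie : ∀ w, w ≠ u → phiTie c w = phiTie (Function.update c i b) w := by
        intro w _
        unfold phiTie
        rw [Function.update_of_ne]
        intro hEq
        have : (Sum.inr w : V ⊕ V) = Sum.inl u :=
          (psi V).injective (hEq.trans (by rw [← hix, hx]))
        simp at this
      refine le_trans (MyGraph.Dfun_diff G (↑R₀) t _ _ _ _ u hcol htie) (hball u)
    · -- a tie coordinate
      have hcol : ∀ w, w ≠ u → phiCol c w = phiCol (Function.update c i b) w := by
        intro w _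
        unfold phiCol
        rw [Function.update_of_ne]
        intro hEq
        have : (Sum.inl w : V ⊕ V) = Sum.inr u :=
          (psi V).injective (hEq.trans (by rw [← hix, hx]))
        simp at this
      have htie : ∀ w, w ≠ u → phiTie c w = phiTie (Function.update c i b) w := by
        intro w hw
        unfold phiTie
        rw [Function.update_of_ne]
        intro hEq
        apply hw
        have : (Sum.inr w : V ⊕ V) = Sum.inr u :=
          (psi V).injective (hEq.trans (by rw [← hix, hx]))
        simpa using this
      refine le_trans (MyGraph.Dfun_diff G (↑R₀) t _ _ _ _ u hcol htie) (hball u)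
  -- the seed set is within distance t
  have hsub : R₀ ⊆ Finset.univ.filter (fun v => distSet G (↑R₀) v ≤ (t : ℕ∞)) := by
    intro v hv
    apply Finset.mem_filter.mpr
    refine ⟨Finset.mem_univ _, ?_⟩
    rw [MyGraph.distSet_zero_of_mem G (↑R₀) (by exact_mod_cast hv)]
    exact zero_le
  -- expectation lower bound
  have hEf : 2 * ε * (R₀.card : ℝ) ≤ MyMcD.Ex pv f := by
    have hfeq : f = fun c => ∑ v ∈ Finset.univ.filter (fun v => distSet G (↑R₀) v ≤ (t:ℕ∞)),
        (if theColor G (↑R₀) (phiCol c) (phiTie c) v then (1:ℝ) else -1) := rfl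
    rw [hfeq, MyMcD.Ex_sum]
    have hterm : ∀ v ∈ Finset.univ.filter (fun v => distSet G (↑R₀) v ≤ (t:ℕ∞)),
        (if v ∈ R₀ then 2*ε else 0) ≤
        MyMcD.Ex pv (fun c => if theColor G (↑R₀) (phiCol c) (phiTie c) v then (1:ℝ) else -1) := by
      intro v _
      set Fv : (Fin (nv + nv) → Bool) → Bool :=
        fun c => theColor G (↑R₀) (phiCol c) (phiTie c) v with hFv
      have hlin : MyMcD.Ex pv (fun c => if Fv c then (1:ℝ) else -1) =
          2 * MyMcD.Ex pv (fun c => if Fv c then (1:ℝ) else 0) - 1 := by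
        have heq : (fun c => if Fv c then (1:ℝ) else -1) =
            fun c => 2 * (if Fv c then (1:ℝ) else 0) + (-1) := by
          funext c
          by_cases h : Fv c
          · rw [if_pos h, if_pos h]; ring
          · rw [if_neg h, if_neg h]; ring
        rw [heq, MyMcD.Ex_add pv (fun c => 2 * (if Fv c then (1:ℝ) else 0)) (fun _ => -1),
          MyMcD.Ex_smul, MyMcD.Ex_const]
        ring
      by_cases hvR : v ∈ R₀
      · have hcoord : (fun c => if Fv c then (1:ℝ) else 0) =
            fun c => if c ((psi V) (Sum.inl v)) then (1:ℝ) else 0 := by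
          funext c
          rw [hFv]
          dsimp only
          exact congrArg (fun b : Bool => if b then (1:ℝ) else 0)
            (MyGraph.theColor_seed G (↑R₀) (phiCol c) (phiTie c) (v := v) (by exact_mod_cast hvR))
        rw [if_pos hvR, hlin, hcoord, MyMcD.Ex_coord, hpv, pvec_inl]
        ring_nf
        linarith
      · rw [if_neg hvR, hlin]
        have hmono : Monotone (fun c : Fin (nv+nv) → Bool => if Fv c then (1:ℝ) else 0) := by
          intro c c' hcc
          have hF : Fv c ≤ Fv c' := by
            rw [hFv]
            apply MyGraph.theColor_mono
            · intro w; exact hcc (psi V (Sum.inl w))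
            · intro w; exact hcc (psi V (Sum.inr w))
          dsimp only
          have hnn : ∀ b : Bool, (0:ℝ) ≤ if b = true then 1 else 0 := by
            intro b; cases b <;> norm_num
          rcases Bool.eq_false_or_eq_true (Fv c) with h | h
          · rw [h, Bool.le_iff_imp.mp hF h]
          · rw [h]
            simpa using hnn (Fv c')
        have hflip : ∀ c : Fin (nv+nv) → Bool, Fv (fun j => !(c j)) = !(Fv c) := by
          intro c
          rw [hFv]
          dsimp only
          have h1 : phiCol (fun j => !(c j)) = fun w => !(phiCol c w) := rfl
          have h2 : phiTie (fun j => !(c j)) = fun w => !(phiTie c w) := rfl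
          rw [h1, h2]
          exact MyGraph.theColor_flip G (↑R₀) _ _ v
        have hhalf : MyMcD.Ex (fun _ => (1/2:ℝ)) (fun c => if Fv c then (1:ℝ) else 0) = 1/2 :=
          MyMcD.Ex_half_selfflip Fv hflip
        have hge : (1/2 : ℝ) ≤ MyMcD.Ex pv (fun c => if Fv c then (1:ℝ) else 0) := by
          rw [← hhalf]
          apply MyMcD.Ex_mono_p (fun _ => by norm_num) _ hp1 hmono
          intro i
          rcases pvec_cases (1/2+ε) i with h | h <;> rw [hpv, h] <;> linarith
        linarith
    calc 2 * ε * (R₀.card : ℝ)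
        = ∑ v ∈ Finset.univ.filter (fun v => distSet G (↑R₀) v ≤ (t:ℕ∞)),
            (if v ∈ R₀ then 2*ε else 0) := by
          rw [Finset.sum_ite_mem, Finset.inter_eq_right.mpr hsub, Finset.sum_const,
            nsmul_eq_mul]
          ring
      _ ≤ _ := Finset.sum_le_sum hterm
  -- positivity facts
  have hcard0 : 0 < R₀.card := Finset.card_pos.mpr hR
  have hlam0 : (0:ℝ) < 2 * ε * (R₀.card : ℝ) := by
    have : (0:ℝ) < (R₀.card : ℝ) := by exact_mod_cast hcard0
    positivity
  have hS : (∑ _i : Fin (nv + nv), κ^2) = ((nv + nv : ℕ) : ℝ) * κ^2 := by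
    rw [Finset.sum_const, Finset.card_univ, Fintype.card_fin, nsmul_eq_mul]
  have hnv0 : 0 < nv := by
    rw [hnv]
    exact Fintype.card_pos_iff.mpr ⟨hR.choose⟩
  have hS0 : (0:ℝ) < ∑ _i : Fin (nv + nv), κ^2 := by
    rw [hS]
    have h1 : (0:ℝ) < ((nv + nv : ℕ) : ℝ) := by
      have : 0 < nv + nv := by omega
      exact_mod_cast this
    positivity
  -- event implication
  have hev : ∀ c : Fin (nv + nv) → Bool,
      (if (whiteCount G (↑R₀) (phiCol c) (phiTie c) t ≤
          blackCount G (↑R₀) (phiCol c) (phiTie c) t) then (1:ℝ) else 0) ≤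
      (if f c ≤ MyMcD.Ex pv f - 2 * ε * (R₀.card : ℝ) then (1:ℝ) else 0) := by
    intro c
    by_cases h : whiteCount G (↑R₀) (phiCol c) (phiTie c) t ≤
        blackCount G (↑R₀) (phiCol c) (phiTie c) t
    · rw [if_pos h, if_pos]
      have hD : f c ≤ 0 := by
        rw [hf]
        dsimp only
        rw [MyGraph.Dfun_eq]
        have : (whiteCount G (↑R₀) (phiCol c) (phiTie c) t : ℝ) ≤
            (blackCount G (↑R₀) (phiCol c) (phiTie c) t : ℝ) := by exact_mod_cast h
        linarith
      linarith
    · rw [if_neg h]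
      by_cases h2 : f c ≤ MyMcD.Ex pv f - 2 * ε * (R₀.card : ℝ) <;> simp [h2]
  -- put everything together
  have hchern := MyMcD.chernoff pv (fun _ => κ) hp0 hp1 f hbd
    (2 * ε * (R₀.card : ℝ)) hlam0 hS0
  calc modPr V (1/2 + ε) (fun col tie =>
        whiteCount G (↑R₀) col tie t ≤ blackCount G (↑R₀) col tie t)
      = MyMcD.Ex pv (fun c => if (whiteCount G (↑R₀) (phiCol c) (phiTie c) t ≤
          blackCount G (↑R₀) (phiCol c) (phiTie c) t) then (1:ℝ) else 0) := by
        refine (modPr_eq_Ex (1/2 + ε) _).trans ?_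
        apply congrArg (MyMcD.Ex pv)
        funext c
        congr
    _ ≤ MyMcD.Ex pv (fun c => if f c ≤ MyMcD.Ex pv f - 2 * ε * (R₀.card : ℝ)
          then (1:ℝ) else 0) := MyMcD.Ex_mono_fun hp0 hp1 hev
    _ ≤ Real.exp (-((2 * ε * (R₀.card : ℝ))^2) / (2 * ∑ _i : Fin (nv + nv), κ^2)) := hchern
    _ = Real.exp (-((2 * ε * (R₀.card : ℝ))^2) /
        (2 * (((nv + nv : ℕ) : ℝ) * (4 * ((M : ℕ) : ℝ)^t)^2))) := by
        rw [hS, hκ]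
  
end Asm


set_option maxHeartbeats 2000000 in
/-- there is a constant `C > 0` depending only on `α, ε` such that for all
sufficiently large `n`, all `μ ∈ [1/√n, 1)`, all `t ≥ 1`, and every `n`-node graph with
maximum degree `Δ ≤ (C·n/log(1/μ))^{1/(2t)}`, for every seed set of size `αn` the
probability that an `(α,ε)`-moderate attacker wins in `t` rounds (`b̂_t ≥ ŵ_t`) is at
most `μ`. -/
theorem moderate_attacker_fails_small_max_degree
    (α ε : ℝ) (hα0 : 0 < α) (hα : α < 1/2) (hε0 : 0 < ε) (hε : ε < 1/2) :
    ∃ C : ℝ, 0 < C ∧ ∃ N : ℕ, ∀ n : ℕ, N ≤ n →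
      ∀ μ : ℝ, 1 / Real.sqrt n ≤ μ → μ < 1 →
        ∀ t : ℕ, 1 ≤ t →
          ∀ (V : Type) [Fintype V] [DecidableEq V] (G : SimpleGraph V),
            Fintype.card V = n →
            (∀ v : V, (G.degree v : ℝ) ≤
                (C * n / Real.log (1/μ)) ^ ((1 : ℝ) / (2 * t))) →
            ∀ R₀ : Finset V, (R₀.card : ℝ) = α * n →
              modPr V (1/2 + ε) (fun col tie =>
                  whiteCount G (↑R₀) col tie t ≤ blackCount G (↑R₀) col tie t) ≤ μ := by
  have hεα2 : (0:ℝ) < ε^2 * α^2 := by positivity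
  refine ⟨ε^2 * α^2 / 32, by positivity, ⌈(16 / (ε^2*α^2))^2⌉₊ + 1, ?_⟩
  intro n hn μ hμlow hμ1 t ht V _ _ G hcard hdeg R₀ hR₀card
  have hn1 : 1 ≤ n := le_trans (Nat.le_add_left 1 _) hn
  have hnR : (0:ℝ) < n := by exact_mod_cast hn1
  have hsqrt0 : (0:ℝ) < Real.sqrt n := Real.sqrt_pos.mpr hnR
  have hμ0 : 0 < μ := lt_of_lt_of_le (by positivity) hμlow
  set L := Real.log (1/μ) with hL
  have hL0 : 0 < L := by
    rw [hL]
    apply Real.log_pos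
    rw [lt_div_iff₀ hμ0]
    linarith
  -- (*) 16 L ≤ ε²α² n
  have hNsqrt : 16 / (ε^2*α^2) ≤ Real.sqrt n := by
    apply Real.le_sqrt_of_sq_le
    have h1 : ((16 / (ε^2*α^2))^2 : ℝ) ≤ (⌈(16 / (ε^2*α^2))^2⌉₊ : ℝ) := Nat.le_ceil _
    have h2 : ((⌈(16 / (ε^2*α^2))^2⌉₊ : ℕ) : ℝ) ≤ (n:ℝ) := by
      exact_mod_cast le_trans (Nat.le_succ _) hn
    linarith
  have hstar : 16 * L ≤ ε^2 * α^2 * n := by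
    have hinvμ : 1/μ ≤ Real.sqrt n := by
      rw [div_le_iff₀ hμ0]
      rw [div_le_iff₀ hsqrt0] at hμlow
      linarith [mul_comm μ (Real.sqrt n)]
    have hlog1 : L ≤ Real.log (Real.sqrt n) :=
      Real.log_le_log (by positivity) hinvμ
    have hlog2 : Real.log (Real.sqrt n) ≤ Real.sqrt n :=
      le_trans (Real.log_le_sub_one_of_pos hsqrt0) (by linarith)
    have hLs : L ≤ Real.sqrt n := le_trans hlog1 hlog2
    have h16 : 16 ≤ ε^2*α^2 * Real.sqrt n := by
      rw [div_le_iff₀ hεα2] at hNsqrt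
      linarith [mul_comm (Real.sqrt n) (ε^2*α^2)]
    have hsq : Real.sqrt n * Real.sqrt n = n := Real.mul_self_sqrt (le_of_lt hnR)
    calc 16 * L ≤ 16 * Real.sqrt n := by nlinarith
      _ ≤ (ε^2*α^2 * Real.sqrt n) * Real.sqrt n := by nlinarith
      _ = ε^2 * α^2 * n := by rw [mul_assoc, hsq]
  have hR₀ne : R₀.Nonempty := by
    have hpos : (0:ℝ) < α * n := by positivity
    rw [← hR₀card] at hpos
    apply Finset.card_pos.mp
    exact_mod_cast hpos
  -- maximum degree
  set Δn : ℕ := Finset.univ.sup (fun v => G.degree v) with hΔn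
  have hΔ : ∀ v : V, G.degree v ≤ Δn := fun v => Finset.le_sup (f := fun v => G.degree v) (Finset.mem_univ v)
  set X : ℝ := (ε ^ 2 * α ^ 2 / 32 * n / L) ^ ((1:ℝ)/(2*t)) with hX
  have hCnL0 : (0:ℝ) ≤ ε ^ 2 * α ^ 2 / 32 * n / L := by positivity
  have hX0 : 0 ≤ X := Real.rpow_nonneg hCnL0 _
  have hΔle : (Δn : ℝ) ≤ X := by
    have h1 : Δn ≤ ⌊X⌋₊ := Finset.sup_le fun v _ => Nat.le_floor (by rw [hX]; exact hdeg v)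
    calc (Δn:ℝ) ≤ (⌊X⌋₊ : ℝ) := by exact_mod_cast h1
      _ ≤ X := Nat.floor_le hX0
  have hM1R : (1:ℝ) ≤ ((max Δn 1 : ℕ):ℝ) := by exact_mod_cast le_max_right Δn 1
  have hMt0 : (0:ℝ) < (((max Δn 1 : ℕ):ℝ)^t)^2 := by
    have : (0:ℝ) < ((max Δn 1 : ℕ):ℝ) := lt_of_lt_of_le one_pos hM1R
    positivity
  have hkey : (((max Δn 1 : ℕ):ℝ)^t)^2 ≤ ε^2*α^2*n/(16*L) := by
    rcases Nat.eq_zero_or_pos Δn with h0 | h1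
    · have hM1 : max Δn 1 = 1 := by rw [h0]; simp
      rw [hM1]
      simp only [Nat.cast_one, one_pow]
      rw [le_div_iff₀ (by positivity)]
      linarith
    · have hMeq : max Δn 1 = Δn := max_eq_left h1
      have hpow : (((max Δn 1 : ℕ):ℝ)^t)^2 = ((max Δn 1 : ℕ):ℝ)^(2*t) := by
        rw [← pow_mul, mul_comm]
      rw [hpow, hMeq]
      have h2 : ((Δn:ℝ))^(2*t) ≤ X^(2*t) := pow_le_pow_left₀ (by positivity) hΔle _
      have h3 : X^(2*t : ℕ) = ε ^ 2 * α ^ 2 / 32 * n / L := by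
        rw [← Real.rpow_natCast X (2*t), hX, ← Real.rpow_mul hCnL0]
        have ht0 : (t:ℝ) ≠ 0 := by
          have : (1:ℝ) ≤ (t:ℝ) := by exact_mod_cast ht
          linarith
        rw [show ((1:ℝ)/(2*(t:ℝ)) * ((2*t : ℕ):ℝ)) = 1 from by push_cast; field_simp]
        exact Real.rpow_one _
      refine le_trans (h2.trans_eq h3) ?_
      rw [div_le_div_iff₀ (by positivity) (by positivity)]
      nlinarith [mul_pos (mul_pos hεα2 hnR) hL0]
  -- main probabilistic bound
  have hmb := Asm.main_bound G R₀ t ε hε0 hε Δn hΔ hR₀ne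
  rw [hcard] at hmb
  refine hmb.trans ?_
  have hexp_eq : -((2 * ε * (R₀.card : ℝ))^2) /
      (2 * (((n + n : ℕ) : ℝ) * (4 * ((max Δn 1 : ℕ) : ℝ)^t)^2)) =
      -(ε^2*α^2*(n:ℝ) / (16 * (((max Δn 1 : ℕ):ℝ)^t)^2)) := by
    rw [hR₀card]
    have hMtne : (((max Δn 1 : ℕ):ℝ)^t) ≠ 0 := by
      intro hzero
      rw [hzero] at hMt0
      simp at hMt0
    have hnne : ((n:ℝ)) ≠ 0 := ne_of_gt hnR
    push_cast
    field_simp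
    ring
  rw [hexp_eq]
  have hLle : L ≤ ε^2*α^2*(n:ℝ)/(16*(((max Δn 1 : ℕ):ℝ)^t)^2) := by
    rw [le_div_iff₀ (by positivity)]
    rw [le_div_iff₀ (by positivity)] at hkey
    nlinarith
  calc Real.exp (-(ε^2*α^2*(n:ℝ) / (16 * (((max Δn 1 : ℕ):ℝ)^t)^2)))
      ≤ Real.exp (-L) := Real.exp_le_exp.mpr (neg_le_neg hLle)
    _ = μ := by
        rw [hL, one_div, Real.log_inv, neg_neg, Real.exp_log hμ0]
end

section
/- Let G be a simple graph on n nodes with minimum degree δ ≥ 1, and suppose each node is, independently, a seed node with probability α ∈ (0,1). Then with probability at least 1 − 1/n, every node v with d(v,R₀) < ∞ satisfies d(v,R₀) ≤ (6/(αδ))·ln n + 1. In particular, for connected G the stabilization time of the diffusion process (the number of rounds until every node is colored, which equals max_v d(v,R₀)) is O((1/(αδ))·log n) asymptotically almost surely. -/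
open Finset
open scoped Classical

set_option linter.unusedSectionVars false
set_option linter.unusedVariables false
set_option linter.unreachableTactic false
set_option linter.unusedTactic false

section AuxProb
open SimpleGraph
variable {V : Type*} [Fintype V] [DecidableEq V]


lemma bernWeight_nonneg {p : ℝ} (h0 : 0 ≤ p) (h1 : p ≤ 1) (c : V → Bool) :
    0 ≤ bernWeight p c :=
  Finset.prod_nonneg fun v _ => by split <;> linarith

lemma sum_bernWeight {p : ℝ} : ∑ c : V → Bool, bernWeight (V := V) p c = 1 := by
  unfold bernWeight
  have := Finset.prod_univ_sum (fun _ : V => (Finset.univ : Finset Bool))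
    (fun _ b => if b then p else 1 - p)
  rw [Fintype.piFinset_univ] at this
  rw [← this]
  simp

lemma bernPr_true {p : ℝ} {E : (V → Bool) → Prop} (h : ∀ c, E c) :
    bernPr V p E = 1 := by
  unfold bernPr
  rw [← sum_bernWeight (V := V) (p := p)]
  exact Finset.sum_congr rfl fun c _ => if_pos (h c)

lemma bernPr_add_compl {p : ℝ} (E : (V → Bool) → Prop) :
    bernPr V p E + bernPr V p (fun c => ¬ E c) = 1 := by
  unfold bernPr
  rw [← Finset.sum_add_distrib, ← sum_bernWeight (V := V) (p := p)]
  refine Finset.sum_congr rfl fun c _ => ?_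
  by_cases h : E c <;> simp [h]

lemma bernPr_mono {p : ℝ} (h0 : 0 ≤ p) (h1 : p ≤ 1) {E F : (V → Bool) → Prop}
    (h : ∀ c, E c → F c) : bernPr V p E ≤ bernPr V p F := by
  refine Finset.sum_le_sum fun c _ => ?_
  by_cases hc : E c
  · rw [if_pos hc, if_pos (h c hc)]
  · rw [if_neg hc]
    split
    · exact bernWeight_nonneg h0 h1 c
    · exact le_refl _

lemma bernPr_nonneg {p : ℝ} (h0 : 0 ≤ p) (h1 : p ≤ 1) (E : (V → Bool) → Prop) :
    0 ≤ bernPr V p E := by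
  refine Finset.sum_nonneg fun c _ => ?_
  split
  · exact bernWeight_nonneg h0 h1 c
  · exact le_refl _

lemma bernPr_union_bound {p : ℝ} (h0 : 0 ≤ p) (h1 : p ≤ 1) (B : V → (V → Bool) → Prop) :
    bernPr V p (fun c => ∃ v, B v c) ≤ ∑ v, bernPr V p (B v) := by
  unfold bernPr
  rw [Finset.sum_comm]
  refine Finset.sum_le_sum fun c _ => ?_
  beta_reduce
  by_cases hc : ∃ v, B v c
  · obtain ⟨v0, hv0⟩ := hc
    rw [if_pos ⟨v0, hv0⟩]
    have h2 : bernWeight p c = (if B v0 c then bernWeight p c else 0) := (if_pos hv0).symm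
    refine le_trans (le_of_eq h2) ?_
    refine Finset.single_le_sum (f := fun v => if B v c then bernWeight p c else 0)
      (fun v _ => ?_) (Finset.mem_univ v0)
    split
    · exact bernWeight_nonneg h0 h1 c
    · exact le_refl _
  · rw [if_neg hc]
    refine Finset.sum_nonneg fun v _ => ?_
    split
    · exact bernWeight_nonneg h0 h1 c
    · exact le_refl _

lemma bernPr_allFalse {p : ℝ} (h0 : 0 ≤ p) (h1 : p ≤ 1) (S : Finset V) :
    bernPr V p (fun c => ∀ u ∈ S, c u = false) = (1 - p) ^ S.card := by
  unfold bernPr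
  beta_reduce
  have key : ∀ c : V → Bool,
      (@ite ℝ (∀ u ∈ S, c u = false) (Classical.propDecidable _) (bernWeight p c) 0)
        = ∏ v, (if v ∈ S then (if c v then 0 else 1 - p) else (if c v then p else 1 - p)) := by
    intro c
    by_cases h : ∀ u ∈ S, c u = false
    · rw [if_pos h]
      unfold bernWeight
      refine Finset.prod_congr rfl fun v _ => ?_
      by_cases hv : v ∈ S
      · simp [hv, h v hv]
      · simp [hv]
    · rw [if_neg h]
      push_neg at h
      obtain ⟨u, hu, hcu⟩ := h
      rw [eq_comm]
      refine Finset.prod_eq_zero (Finset.mem_univ u) ?_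
      simp [hu, hcu]
  refine (Finset.sum_congr rfl fun c _ => key c).trans ?_
  have hps := Finset.prod_univ_sum (fun _ : V => (Finset.univ : Finset Bool))
    (fun v b => if v ∈ S then (if b then 0 else 1 - p) else (if b then p else 1 - p))
  rw [Fintype.piFinset_univ] at hps
  rw [← hps]
  have hv : ∀ v : V, (∑ b : Bool, if v ∈ S then (if b then 0 else 1 - p) else (if b then p else 1 - p))
      = if v ∈ S then 1 - p else 1 := by
    intro v
    by_cases hvS : v ∈ S <;> simp [hvS] <;> ring
  simp only [hv]
  rw [Finset.prod_ite_mem Finset.univ S (fun _ => 1 - p), Finset.univ_inter,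
    Finset.prod_const]

end AuxProb

section AuxGraph
open SimpleGraph
variable {V : Type*}


lemma length_drop {G : SimpleGraph V} {u v : V} (p : G.Walk u v) (n : ℕ) :
    (p.drop n).length = p.length - n := by
  induction p generalizing n with
  | nil => cases n <;> simp [SimpleGraph.Walk.drop]
  | cons h q ih =>
    cases n with
    | zero => simp [SimpleGraph.Walk.drop]
    | succ n => simp [SimpleGraph.Walk.drop, ih]

lemma edist_getVert_le {G : SimpleGraph V} {u v : V} (p : G.Walk u v) (k : ℕ) :
    G.edist u (p.getVert k) ≤ k := by
  induction k with
  | zero => simp [p.getVert_zero, SimpleGraph.edist_self]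
  | succ k ih =>
    by_cases hk : k < p.length
    · have hadj := p.adj_getVert_succ hk
      calc G.edist u (p.getVert (k+1))
          ≤ G.edist u (p.getVert k) + G.edist (p.getVert k) (p.getVert (k+1)) :=
            SimpleGraph.edist_triangle
        _ ≤ (k : ℕ∞) + 1 := add_le_add ih (le_of_eq (edist_eq_one_iff_adj.mpr hadj))
        _ = ((k+1 : ℕ) : ℕ∞) := by push_cast; ring
    · have h1 : p.getVert (k+1) = p.getVert k := by
        rw [p.getVert_of_length_le (le_of_not_gt hk),
          p.getVert_of_length_le ((le_of_not_gt hk).trans (Nat.le_succ k))]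
      rw [h1]
      exact ih.trans (by exact_mod_cast Nat.cast_le.mpr (Nat.le_succ k))

/-- On a shortest walk, the `k`-th vertex is at distance exactly `k`. -/
lemma edist_getVert_shortest {G : SimpleGraph V} {u v : V} (p : G.Walk u v)
    (hp : (p.length : ℕ∞) = G.edist u v) {k : ℕ} (hk : k ≤ p.length) :
    G.edist u (p.getVert k) = k := by
  refine le_antisymm (edist_getVert_le p k) ?_
  by_contra hlt
  push_neg at hlt
  -- edist u (getVert k) < k, finite
  set x := p.getVert k
  have hxfin : G.edist u x ≠ ⊤ := ne_top_of_le_ne_top (by simp) (edist_getVert_le p k)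
  lift G.edist u x to ℕ using hxfin with a ha
  have ha' : a < k := by exact_mod_cast hlt
  have hxw : G.edist x v ≤ (p.length - k : ℕ) := by
    have := SimpleGraph.edist_le (p.drop k)
    rwa [length_drop] at this
  have hcontr : G.edist u v < (p.length : ℕ∞) := by
    calc G.edist u v ≤ G.edist u x + G.edist x v := SimpleGraph.edist_triangle
      _ ≤ (a : ℕ∞) + (p.length - k : ℕ) := add_le_add (le_of_eq ha.symm) hxw
      _ = ((a + (p.length - k) : ℕ) : ℕ∞) := by push_cast; ring
      _ < (p.length : ℕ∞) := by
          have : a + (p.length - k) < p.length := by omega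
          exact_mod_cast this
  rw [← hp] at hcontr
  exact lt_irrefl _ hcontr

end AuxGraph

section AuxPack
open SimpleGraph
variable {V : Type*} [Fintype V] [DecidableEq V]

lemma ball_packing [Fintype V] [DecidableEq V] (G : SimpleGraph V) {δ : ℕ}
    (hδ : ∀ v : V, δ ≤ G.degree v) (v w : V) (t : ℕ) (ht2 : 2 ≤ t)
    (hfin : G.edist v w ≠ ⊤) (hten : (t : ℕ∞) ≤ G.edist v w) :
    ∃ S : Finset V, ((t - 2) / 3 + 1) * (δ + 1) ≤ S.card ∧
      ∀ u ∈ S, G.edist v u < (t : ℕ∞) := by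
  obtain ⟨p, hp⟩ := exists_walk_of_edist_ne_top hfin
  have htlen : t ≤ p.length := by
    have h : (t : ℕ∞) ≤ (p.length : ℕ∞) := hp ▸ hten
    exact_mod_cast h
  set K := (t - 2) / 3 with hK
  have h3K : 3 * K ≤ t - 2 := by omega
  -- the centers
  set x : ℕ → V := fun k => p.getVert (3 * k) with hx
  have hxd : ∀ k ≤ K, G.edist v (x k) = (3 * k : ℕ) :=
    fun k hk => edist_getVert_shortest p hp (by omega)
  -- distance from a center to a member of its closed neighborhood
  have hnbr : ∀ k (u : V), u ∈ insert (x k) (G.neighborFinset (x k)) →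
      G.edist (x k) u ≤ 1 := by
    intro k u hu
    rcases Finset.mem_insert.mp hu with h | h
    · subst h; simp [SimpleGraph.edist_self]
    · exact le_of_eq (edist_eq_one_iff_adj.mpr ((G.mem_neighborFinset _ _).mp h))
  refine ⟨(Finset.range (K + 1)).biUnion
    (fun k => insert (x k) (G.neighborFinset (x k))), ?_, ?_⟩
  · rw [Finset.card_biUnion]
    · have hcard : ∀ k, δ + 1 ≤ (insert (x k) (G.neighborFinset (x k))).card := by
        intro k
        rw [Finset.card_insert_of_notMem (G.notMem_neighborFinset_self _)]
        have := hδ (x k)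
        rw [← G.card_neighborFinset_eq_degree] at this
        omega
      calc (K + 1) * (δ + 1) = ∑ _k ∈ Finset.range (K + 1), (δ + 1) := by
            simp [mul_comm]
        _ ≤ _ := Finset.sum_le_sum fun k _ => hcard k
    · intro a ha b hb hab
      rw [Function.onFun, Finset.disjoint_left]
      intro u hua hub
      have h1 : G.edist (x a) u ≤ 1 := hnbr a u hua
      have h2 : G.edist (x b) u ≤ 1 := hnbr b u hub
      have hda : G.edist v (x a) = (3 * a : ℕ) := hxd a (by simpa using Nat.lt_succ_iff.mp (Finset.mem_range.mp ha))
      have hdb : G.edist v (x b) = (3 * b : ℕ) := hxd b (by simpa using Nat.lt_succ_iff.mp (Finset.mem_range.mp hb))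
      have hab2 : G.edist (x a) (x b) ≤ 2 := by
        calc G.edist (x a) (x b) ≤ G.edist (x a) u + G.edist u (x b) :=
              SimpleGraph.edist_triangle
          _ ≤ 1 + 1 := add_le_add h1 (SimpleGraph.edist_comm ▸ h2)
          _ = 2 := by norm_num
      have hba : (3 * b : ℕ∞) ≤ (3 * a : ℕ) + 2 := by
        calc (3 * b : ℕ∞) = G.edist v (x b) := by exact_mod_cast hdb.symm
          _ ≤ G.edist v (x a) + G.edist (x a) (x b) := SimpleGraph.edist_triangle
          _ ≤ (3 * a : ℕ) + 2 := add_le_add (le_of_eq hda) hab2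
      have hab' : (3 * a : ℕ∞) ≤ (3 * b : ℕ) + 2 := by
        calc (3 * a : ℕ∞) = G.edist v (x a) := by exact_mod_cast hda.symm
          _ ≤ G.edist v (x b) + G.edist (x b) (x a) := SimpleGraph.edist_triangle
          _ ≤ (3 * b : ℕ) + 2 := add_le_add (le_of_eq hdb) (SimpleGraph.edist_comm ▸ hab2)
      have hba' : 3 * b ≤ 3 * a + 2 := by exact_mod_cast hba
      have hab'' : 3 * a ≤ 3 * b + 2 := by exact_mod_cast hab'
      omega
  · intro u hu
    obtain ⟨k, hk, hu⟩ := Finset.mem_biUnion.mp hu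
    have hk' : k ≤ K := Nat.lt_succ_iff.mp (Finset.mem_range.mp hk)
    have : G.edist v u ≤ (3 * k : ℕ) + 1 :=
      le_trans SimpleGraph.edist_triangle (add_le_add (le_of_eq (hxd k hk')) (hnbr k u hu))
    calc G.edist v u ≤ (3 * k : ℕ) + 1 := this
      _ = ((3 * k + 1 : ℕ) : ℕ∞) := by push_cast; ring
      _ < (t : ℕ∞) := by
          have : 3 * k + 1 < t := by omega
          exact_mod_cast this

end AuxPack

section AuxPV
open SimpleGraph
variable {V : Type*} [Fintype V] [DecidableEq V]

lemma distSet_le {G : SimpleGraph V} {R : Set V} {u v : V} (hu : u ∈ R) :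
    distSet G R v ≤ G.edist u v := by
  exact iInf₂_le u hu

lemma distSet_ne_top_witness {G : SimpleGraph V} {R : Set V} {v : V}
    (h : distSet G R v ≠ ⊤) : ∃ u ∈ R, G.edist u v ≠ ⊤ := by
  by_contra hc
  push_neg at hc
  apply h
  unfold distSet
  simp only [iInf_eq_top]
  intro u hu
  exact hc u hu

/-- Per-vertex bound: probability that `v` is at finite distance more than
`(6/(αδ)) log n + 1` from the random seed set is at most `1/n²`. -/
lemma bad_vertex_bound (G : SimpleGraph V) (n : ℕ) (hn1 : 1 ≤ n)
    (δ : ℕ) (hδ1 : 1 ≤ δ) (hδ : ∀ v : V, δ ≤ G.degree v)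
    (α : ℝ) (hα0 : 0 < α) (hα1 : α < 1) (v : V) :
    bernPr V α (fun c => distSet G {u | c u = true} v ≠ ⊤ ∧
      ¬ (((distSet G {u | c u = true} v).toNat : ℝ) ≤ (6 / (α * δ)) * Real.log n + 1)) ≤
      1 / (n : ℝ) ^ 2 := by
  have hα0' : (0:ℝ) ≤ α := hα0.le
  have hα1' : α ≤ 1 := hα1.le
  have hδR : (0:ℝ) < (δ : ℝ) := by exact_mod_cast hδ1
  have hnR : (0:ℝ) < (n : ℝ) := by exact_mod_cast hn1
  have hlogn : 0 ≤ Real.log n := Real.log_nonneg (by exact_mod_cast hn1)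
  set T : ℝ := (6 / (α * δ)) * Real.log n + 1 with hT
  clear_value T
  have hT0 : 0 ≤ T := by
    have : 0 ≤ (6 / (α * δ)) * Real.log n := by positivity
    linarith
  have hT1 : 1 ≤ T := by
    have : 0 ≤ (6 / (α * δ)) * Real.log n := by positivity
    linarith
  set t₀ : ℕ := ⌊T⌋₊ + 1 with ht₀
  clear_value t₀
  have ht₀2 : 2 ≤ t₀ := by
    have : 1 ≤ ⌊T⌋₊ := Nat.le_floor (by exact_mod_cast hT1)
    omega
  have ht₀T : T < (t₀ : ℝ) := by
    rw [ht₀]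
    exact_mod_cast Nat.lt_floor_add_one T
  set K : ℕ := (t₀ - 2) / 3 with hK
  clear_value K
  set m : ℕ := (K + 1) * (δ + 1) with hm
  clear_value m
  -- the key numeric inequality : 2 log n ≤ α * m
  have hnum : 2 * Real.log n ≤ α * m := by
    have h34 : t₀ ≤ 3 * K + 4 := by omega
    have h1 : (t₀ : ℝ) - 1 ≤ 3 * ((K : ℝ) + 1) := by
      push_cast
      have : (t₀ : ℝ) ≤ 3 * (K : ℝ) + 4 := by exact_mod_cast h34
      linarith
    have h2 : (6 / (α * δ)) * Real.log n < 3 * ((K : ℝ) + 1) := by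
      have : (6 / (α * δ)) * Real.log n = T - 1 := by rw [hT]; ring
      rw [this]
      linarith
    have hαδ : 0 < α * (δ:ℝ) := by positivity
    have h3 : 6 * Real.log n < 3 * ((K:ℝ) + 1) * (α * δ) := by
      rw [div_mul_eq_mul_div, div_lt_iff₀ hαδ] at h2
      linarith
    have hmR : (m:ℝ) = ((K:ℝ) + 1) * ((δ:ℝ) + 1) := by rw [hm]; push_cast; ring
    have h4 : ((K:ℝ) + 1) * (δ:ℝ) ≤ (m : ℝ) := by nlinarith
    nlinarith
  by_cases helig : ∃ w : V, G.edist v w ≠ ⊤ ∧ (t₀ : ℕ∞) ≤ G.edist v w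
  · obtain ⟨w, hwfin, hwt⟩ := helig
    obtain ⟨S, hScard, hSdist⟩ := ball_packing G hδ v w t₀ ht₀2 hwfin hwt
    rw [← hK, ← hm] at hScard
    have himp : ∀ c : V → Bool,
        (distSet G {u | c u = true} v ≠ ⊤ ∧
          ¬ (((distSet G {u | c u = true} v).toNat : ℝ) ≤ T)) →
        ∀ u ∈ S, c u = false := by
      intro c ⟨hne, hgt⟩ u huS
      by_contra hcu
      have hcu' : c u = true := by
        cases h : c u
        · exact absurd h hcu
        · rfl
      have huR : u ∈ {u | c u = true} := hcu'
      have hle : distSet G {u | c u = true} v ≤ G.edist u v := distSet_le huR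
      push_neg at hgt
      have hfloor : ⌊T⌋₊ < (distSet G {u | c u = true} v).toNat :=
        (Nat.floor_lt hT0).mpr hgt
      have hge : (t₀ : ℕ∞) ≤ distSet G {u | c u = true} v := by
        rw [← ENat.coe_toNat hne]
        exact_mod_cast (show t₀ ≤ (distSet G {u | c u = true} v).toNat by omega)
      have hlt : G.edist u v < (t₀ : ℕ∞) := by
        rw [SimpleGraph.edist_comm]
        exact hSdist u huS
      exact absurd ((hge.trans hle)) (not_le.mpr hlt)
    calc bernPr V α _ ≤ bernPr V α (fun c => ∀ u ∈ S, c u = false) :=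
          bernPr_mono hα0' hα1' himp
      _ = (1 - α) ^ S.card := bernPr_allFalse hα0' hα1' S
      _ ≤ (1 - α) ^ m := by
          apply pow_le_pow_of_le_one (by linarith) (by linarith) hScard
      _ ≤ Real.exp (-α) ^ m := by
          apply pow_le_pow_left₀ (by linarith)
          linarith [Real.add_one_le_exp (-α)]
      _ = Real.exp (-(α * m)) := by
          rw [← Real.exp_nat_mul]
          ring_nf
      _ ≤ Real.exp (-(2 * Real.log n)) := Real.exp_le_exp.mpr (by linarith)
      _ = 1 / (n : ℝ) ^ 2 := by
          rw [Real.exp_neg, show (2:ℝ) * Real.log n = (2:ℕ) * Real.log n by norm_num,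
            Real.exp_nat_mul, Real.exp_log hnR]
          norm_num
  · -- not eligible: the bad event is impossible
    have himp : ∀ c : V → Bool, ¬ (distSet G {u | c u = true} v ≠ ⊤ ∧
        ¬ (((distSet G {u | c u = true} v).toNat : ℝ) ≤ T)) := by
      rintro c ⟨hne, hgt⟩
      obtain ⟨u, huR, hufin⟩ := distSet_ne_top_witness hne
      push_neg at hgt
      have hfloor : ⌊T⌋₊ < (distSet G {u | c u = true} v).toNat :=
        (Nat.floor_lt hT0).mpr hgt
      have hge : (t₀ : ℕ∞) ≤ distSet G {u | c u = true} v := by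
        rw [← ENat.coe_toNat hne]
        exact_mod_cast (show t₀ ≤ (distSet G {u | c u = true} v).toNat by omega)
      refine helig ⟨u, ?_, ?_⟩
      · rw [SimpleGraph.edist_comm]; exact hufin
      · rw [SimpleGraph.edist_comm]
        exact hge.trans (distSet_le huR)
    have : bernPr V α (fun c => distSet G {u | c u = true} v ≠ ⊤ ∧
        ¬ (((distSet G {u | c u = true} v).toNat : ℝ) ≤ T)) = 0 := by
      unfold bernPr
      refine Finset.sum_eq_zero fun c _ => if_neg (himp c)
    rw [this]
    positivity

end AuxPV

open SimpleGraph in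
/-- in an `n`-node graph with minimum degree `δ ≥ 1`, if each node is
independently a seed with probability `α ∈ (0,1)`, then with probability at least `1 − 1/n`
every node at finite distance from the seed set is at distance at most `(6/(αδ))·ln n + 1`;
hence (for connected graphs) the stabilization time is `O((1/(αδ))·log n)` a.a.s. -/
theorem stabilization_time_upper_bound
    (V : Type*) [Fintype V] [DecidableEq V] (G : SimpleGraph V) (n : ℕ)
    (hn : Fintype.card V = n)
    (δ : ℕ) (hδ1 : 1 ≤ δ) (hδ : ∀ v : V, δ ≤ G.degree v)
    (α : ℝ) (hα0 : 0 < α) (hα1 : α < 1) :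
    1 - 1 / (n : ℝ) ≤
      bernPr V α (fun seed =>
        ∀ v : V, distSet G {u | seed u = true} v ≠ ⊤ →
          (((distSet G {u | seed u = true} v).toNat : ℝ)) ≤
            (6 / (α * δ)) * Real.log n + 1) := by
  rcases Nat.eq_zero_or_pos n with hn0 | hn1
  · subst hn0
    have hemp : IsEmpty V := Fintype.card_eq_zero_iff.mp hn
    rw [bernPr_true (fun c => fun v => hemp.elim v)]
    simp
  · -- n ≥ 1
    set E : (V → Bool) → Prop := fun seed =>
        ∀ v : V, distSet G {u | seed u = true} v ≠ ⊤ →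
          (((distSet G {u | seed u = true} v).toNat : ℝ)) ≤
            (6 / (α * δ)) * Real.log n + 1 with hE
    have hcompl := bernPr_add_compl (V := V) (p := α) E
    have hbound : bernPr V α (fun c => ¬ E c) ≤ 1 / (n : ℝ) := by
      have himp : ∀ c : V → Bool, ¬ E c → ∃ v : V,
          distSet G {u | c u = true} v ≠ ⊤ ∧
          ¬ (((distSet G {u | c u = true} v).toNat : ℝ) ≤ (6 / (α * δ)) * Real.log n + 1) := by
        intro c hc
        obtain ⟨v, hv⟩ := not_forall.mp hc
        exact ⟨v, Classical.not_imp.mp hv⟩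
      calc bernPr V α (fun c => ¬ E c)
          ≤ bernPr V α (fun c => ∃ v : V,
              distSet G {u | c u = true} v ≠ ⊤ ∧
              ¬ (((distSet G {u | c u = true} v).toNat : ℝ) ≤
                (6 / (α * δ)) * Real.log n + 1)) :=
            bernPr_mono hα0.le hα1.le himp
        _ ≤ ∑ _v : V, 1 / (n : ℝ) ^ 2 := by
            refine le_trans (bernPr_union_bound hα0.le hα1.le _) ?_
            exact Finset.sum_le_sum fun v _ =>
              bad_vertex_bound G n hn1 δ hδ1 hδ α hα0 hα1 v
        _ = (n : ℝ) * (1 / (n : ℝ) ^ 2) := by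
            rw [Finset.sum_const, Finset.card_univ, hn]; ring
        _ = 1 / (n : ℝ) := by
            have : (n:ℝ) ≠ 0 := by positivity
            field_simp
      
    linarith [hcompl, hbound]
end

section
/- Let G be a simple graph with minimum degree δ, let v be a node of G and t ∈ ℕ. If N_t(v) ≠ ∅ (some node is at graph distance exactly t from v), then the t-neighborhood of v satisfies |N̂_t(v)| ≥ (t−1)·δ/3; indeed |N̂_t(v)| ≥ ⌊(t+1)/3⌋·(δ+1). -/
open Finset
open scoped Classical

/-!
Walk along a shortest path from `v` to a vertex at distance `t` and stop at the vertices at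
distance `0, 3, 6, …, 3(⌊(t+1)/3⌋ - 1)` from `v`. Their closed neighbourhoods lie in `N̂_t(v)`,
have at least `δ + 1` elements each, and are pairwise disjoint because any two of the vertices
are more than two steps apart.
-/

namespace SimpleGraph

variable {V : Type*} (G : SimpleGraph V)

theorem exists_edist_eq_of_le_edist {v u : V} {t i : ℕ} (h : G.edist v u = t) (hi : i ≤ t) :
    ∃ w, G.edist v w = i := by
  obtain ⟨p, hp⟩ := exists_walk_of_edist_eq_coe h
  have hle : G.edist v (p.getVert i) ≤ i := by simpa [hp, hi] using (p.take i).edist_le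
  have hdrop : G.edist (p.getVert i) u ≤ (t - i : ℕ) := by simpa [hp] using (p.drop i).edist_le
  have htri : (t : ℕ∞) ≤ G.edist v (p.getVert i) + (t - i : ℕ) :=
    h ▸ G.edist_triangle.trans (by gcongr)
  obtain ⟨a, ha, hai⟩ := ENat.le_natCast_iff.mp hle
  rw [ha] at htri
  norm_cast at htri
  exact ⟨p.getVert i, by rw [ha]; congr 1; omega⟩

variable [Fintype V]

noncomputable def closedBallFinset (c : V) (r : ℕ∞) : Finset V :=
  univ.filter fun u => G.edist c u ≤ r

variable {G}

theorem mem_closedBallFinset {c u : V} {r : ℕ∞} :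
    u ∈ G.closedBallFinset c r ↔ G.edist c u ≤ r := by
  simp [closedBallFinset]

theorem closedBallFinset_one (c : V) :
    G.closedBallFinset c 1 = insert c (G.neighborFinset c) := by
  ext u
  simp [mem_closedBallFinset, edist_le_one_iff_adj_or_eq, or_comm, eq_comm]

theorem card_closedBallFinset_one (c : V) :
    (G.closedBallFinset c 1).card = G.degree c + 1 := by
  rw [closedBallFinset_one, card_insert_of_notMem (by simp), card_neighborFinset_eq_degree]

theorem closedBallFinset_subset_closedBallFinset {v c : V} {r R : ℕ∞}
    (h : G.edist v c + r ≤ R) : G.closedBallFinset c r ⊆ G.closedBallFinset v R := by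
  intro u hu
  rw [mem_closedBallFinset] at hu ⊢
  exact G.edist_triangle.trans ((by gcongr : _ ≤ G.edist v c + r).trans h)

theorem disjoint_closedBallFinset_of_edist_eq_mul {v a b : V} {r j k : ℕ}
    (ha : G.edist v a = ((2 * r + 1) * j : ℕ)) (hb : G.edist v b = ((2 * r + 1) * k : ℕ))
    (hjk : j ≠ k) : Disjoint (G.closedBallFinset a r) (G.closedBallFinset b r) := by
  refine Finset.disjoint_left.mpr fun x hxa hxb => hjk ?_
  rw [mem_closedBallFinset] at hxa hxb
  have hab : G.edist a b ≤ (2 * r : ℕ) := by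
    calc G.edist a b ≤ G.edist a x + G.edist x b := G.edist_triangle
      _ ≤ r + r := add_le_add hxa (G.edist_comm ▸ hxb)
      _ = (2 * r : ℕ) := by push_cast; ring
  have le_of_near {c d : V} {m n : ℕ} (hc : G.edist v c = ((2 * r + 1) * m : ℕ))
      (hd : G.edist v d = ((2 * r + 1) * n : ℕ)) (hcd : G.edist c d ≤ (2 * r : ℕ)) : n ≤ m := by
    have h : (((2 * r + 1) * n : ℕ) : ℕ∞) ≤ ((2 * r + 1) * m + 2 * r : ℕ) := by
      calc _ = G.edist v d := hd.symm
        _ ≤ G.edist v c + G.edist c d := G.edist_triangle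
        _ ≤ _ := by rw [hc]; push_cast at hcd ⊢; gcongr
    have h' : (2 * r + 1) * n < (2 * r + 1) * (m + 1) := by norm_cast at h; linarith
    exact Nat.lt_succ_iff.mp (Nat.lt_of_mul_lt_mul_left h')
  exact le_antisymm (le_of_near hb ha (G.edist_comm ▸ hab)) (le_of_near ha hb hab)

theorem mul_le_card_closedBallFinset {δ : ℕ} (hδ : ∀ v : V, δ ≤ G.degree v) {v u : V} {t : ℕ}
    (hu : G.edist v u = t) : (t + 1) / 3 * (δ + 1) ≤ (G.closedBallFinset v t).card := by
  set m := (t + 1) / 3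
  choose w hw using fun k : Fin m => G.exists_edist_eq_of_le_edist hu (i := 3 * k) (by omega)
  have hdisj : ((univ : Finset (Fin m)) : Set (Fin m)).PairwiseDisjoint
      fun k => G.closedBallFinset (w k) 1 := fun j _ k _ hjk =>
    disjoint_closedBallFinset_of_edist_eq_mul (r := 1) (hw j) (hw k) (Fin.val_ne_of_ne hjk)
  have hsub : univ.biUnion (fun k => G.closedBallFinset (w k) 1) ⊆ G.closedBallFinset v t :=
    biUnion_subset.mpr fun k _ => closedBallFinset_subset_closedBallFinset <| by
      rw [hw k]; norm_cast; omega
  calc m * (δ + 1) = ∑ _k : Fin m, (δ + 1) := by simp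
    _ ≤ ∑ k, (G.closedBallFinset (w k) 1).card :=
      sum_le_sum fun k _ => card_closedBallFinset_one (w k) ▸ Nat.add_le_add_right (hδ _) 1
    _ = (univ.biUnion fun k => G.closedBallFinset (w k) 1).card := (card_biUnion hdisj).symm
    _ ≤ _ := card_le_card hsub

end SimpleGraph

/-- If some node is at graph distance exactly `t` from `v` in a graph with
minimum degree `δ`, then the `t`-neighborhood of `v` has at least `⌊(t+1)/3⌋·(δ+1)` nodes,
and in particular at least `(t-1)·δ/3` nodes. -/
theorem tNeighborhood_lower_bound {V : Type*} [Fintype V]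
    (G : SimpleGraph V) (δ : ℕ) (hδ : ∀ v : V, δ ≤ G.degree v)
    (v : V) (t : ℕ) (hne : ∃ u : V, G.edist v u = (t : ℕ∞)) :
    ((t + 1) / 3) * (δ + 1) ≤
      (Finset.univ.filter fun u => G.edist v u ≤ (t : ℕ∞)).card ∧
    ((t : ℝ) - 1) * (δ : ℝ) / 3 ≤
      ((Finset.univ.filter fun u => G.edist v u ≤ (t : ℕ∞)).card : ℝ) := by
  obtain ⟨u, hu⟩ := hne
  have hnat := G.mul_le_card_closedBallFinset hδ hu
  refine ⟨hnat, ?_⟩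
  have hfloor : (t : ℝ) - 1 ≤ 3 * ((t + 1) / 3 : ℕ) := by
    have : t ≤ 3 * ((t + 1) / 3) + 1 := by omega
    rw [sub_le_iff_le_add]; exact_mod_cast this
  have hreal : (((t + 1) / 3 * (δ + 1) : ℕ) : ℝ) ≤ (G.closedBallFinset v t).card := by
    exact_mod_cast hnat
  push_cast at hreal
  have hδ0 : (0 : ℝ) ≤ δ := δ.cast_nonneg
  change _ ≤ ((G.closedBallFinset v t).card : ℝ)
  nlinarith [mul_le_mul_of_nonneg_right hfloor hδ0]
end
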